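/- arXiv:2605.21305 — 6 statements merged into one kernel-verified Lean document; each statement's English description precedes it below -/
import Mathlib

section
/- Let d be a positive integer and S ⊆ ℝ^d a finite non-empty set. Suppose T_2(S) has covering dimension at most 0, i.e., every finite open cover of T_2(S) admits a finite open refinement by pairwise disjoint sets. Let a be the dimension of the affine span of S. Then for every integer r with 1 ≤ r ≤ |S| − a, the set T_r(S) is non-empty, i.e., S admits a Tverberg r-partition. (This is the substance of the paper's Theorem 2, confirming Kalai's cascade conjecture when dim T_2(S) ≤ 0: it yields Σ_{r=1}^{|S|} dim T_r(S) ≥ 0.) -/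
/-
If `dim T₂(S) ≤ 0` then `T₂(S)` is totally disconnected. The Radon point of a nonzero affine
dependence `w` of `S` (the barycentre of its positive part) lies in `T₂(S)`, depends continuously
on `w` and does not change when `w` is rescaled. The nonzero dependences form a connected set, or
a line through `0` with the origin removed when the space `W` of dependences is one-dimensional,
so they all share one Radon point `q`, and the positive part of every dependence is a weight
vector for `q`. In the polytope `B` of convex weights representing `q`, the difference of two
extreme points is a dependence whose positive and negative parts are multiples of these two
points, so distinct extreme points have disjoint supports. As `W` lies in the direction of `B`,
`B` has at least `dim W + 1 = |S| - a` extreme points; the supports of `r` of them, with the unused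
points of `S` added to one part, form a Tverberg `r`-partition with common point `q`.
-/

/-- The Tverberg set `T_r(S)` of a finite point set `S`: points `p` admitting a
partition of `S` into `r` pairwise disjoint parts whose convex hulls all contain `p`. -/
def TverSet {E : Type*} [AddCommGroup E] [Module ℝ E] (r : ℕ) (S : Finset E) : Set E :=
  {p | ∃ A : Fin r → Finset E,
    (∀ i j, i ≠ j → Disjoint (A i) (A j)) ∧
    (⋃ i, (A i : Set E)) = (S : Set E) ∧
    ∀ i, p ∈ convexHull ℝ (A i : Set E)}

/-- `X` has covering dimension at most `k`: every finite open cover admits a finite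
open refinement in which any `k + 2` distinct members have empty intersection. -/
def CovDimLE (X : Type*) [TopologicalSpace X] (k : ℕ) : Prop :=
  ∀ 𝒰 : Finset (Set X), (∀ U ∈ 𝒰, IsOpen U) → ⋃₀ (𝒰 : Set (Set X)) = Set.univ →
    ∃ 𝒱 : Finset (Set X), (∀ V ∈ 𝒱, IsOpen V) ∧ ⋃₀ (𝒱 : Set (Set X)) = Set.univ ∧
      (∀ V ∈ 𝒱, ∃ U ∈ 𝒰, V ⊆ U) ∧
      ∀ 𝒮 : Finset (Set X), 𝒮 ⊆ 𝒱 → k + 2 ≤ 𝒮.card → ⋂₀ (𝒮 : Set (Set X)) = ∅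

open Finset Module Function

theorem CovDimLE.totallySeparatedSpace {X : Type*} [TopologicalSpace X] [T1Space X]
    (h : CovDimLE X 0) : TotallySeparatedSpace X := by
  classical
  refine totallySeparatedSpace_iff_exists_isClopen.2 fun x y hxy => ?_
  obtain ⟨𝒱, hopen, hcover, hrefine, hdisj⟩ := h {{y}ᶜ, {x}ᶜ}
    (by simp) (by simp [← Set.compl_inter, hxy])
  have hpair : ∀ U ∈ 𝒱, ∀ V ∈ 𝒱, U ≠ V → U ∩ V = ∅ := fun U hU V hV hUV => by
    simpa using hdisj {U, V} (by simp [insert_subset_iff, hU, hV]) (by simp [card_pair hUV])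
  -- the refinement is a partition into open sets, so its member containing `x` is clopen
  obtain ⟨V, hV, hxV⟩ := Set.sUnion_eq_univ_iff.1 hcover x
  have hcompl : Vᶜ = ⋃₀ ↑(𝒱.erase V) := by
    ext z
    constructor
    · intro hzV
      obtain ⟨U, hU, hzU⟩ := Set.sUnion_eq_univ_iff.1 hcover z
      exact ⟨U, mem_erase.2 ⟨fun h => hzV (h ▸ hzU), hU⟩, hzU⟩
    · rintro ⟨U, hU, hzU⟩ hzV
      obtain ⟨hUV, hU⟩ := mem_erase.1 hU
      exact (hpair U hU V hV hUV).subset ⟨hzU, hzV⟩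
  refine ⟨V, ⟨isOpen_compl_iff.1 ?_, hopen V hV⟩, hxV, fun hyV => ?_⟩
  · rw [hcompl]
    exact isOpen_sUnion fun U hU => hopen U (mem_of_mem_erase hU)
  · obtain ⟨U, hU, hVU⟩ := hrefine V hV
    simp only [mem_insert, mem_singleton] at hU
    rcases hU with rfl | rfl
    · exact hVU hyV rfl
    · exact hVU hxV rfl

section TverbergPartition

variable {E : Type*} [AddCommGroup E] [Module ℝ E]

theorem mem_tverSet_of_pairwise_disjoint {S : Finset E} {r : ℕ} (hr : 0 < r)
    {A : Fin r → Finset E} {q : E} (hA : Pairwise (Disjoint on A)) (hAS : ∀ j, A j ⊆ S)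
    (hq : ∀ j, q ∈ convexHull ℝ (A j : Set E)) : q ∈ TverSet r S := by
  classical
  -- the points of `S` left over by the `A j` are put into the first part
  let j₀ : Fin r := ⟨0, hr⟩
  let R := S \ univ.biUnion A
  have hRA : ∀ j, Disjoint R (A j) := fun j =>
    disjoint_left.2 fun x hxR hxA => (mem_sdiff.1 hxR).2 (mem_biUnion.2 ⟨j, mem_univ j, hxA⟩)
  refine ⟨update A j₀ (A j₀ ∪ R), fun j k hjk => ?_, ?_, fun j => ?_⟩
  · rcases eq_or_ne j j₀ with rfl | hj
    · rw [update_self, update_of_ne hjk.symm]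
      exact disjoint_union_left.2 ⟨hA hjk, hRA k⟩
    · rcases eq_or_ne k j₀ with rfl | hk
      · rw [update_self, update_of_ne hj]
        exact disjoint_union_right.2 ⟨hA hjk, (hRA j).symm⟩
      · rw [update_of_ne hj, update_of_ne hk]
        exact hA hjk
  · refine subset_antisymm (Set.iUnion_subset fun j => ?_) fun x hx => ?_
    · rcases eq_or_ne j j₀ with hj | hj
      · simpa [hj] using ⟨hAS j₀, sdiff_subset⟩
      · simpa [hj] using hAS j
    · by_cases hxA : x ∈ univ.biUnion A
      · obtain ⟨j, -, hxj⟩ := mem_biUnion.1 hxA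
        refine Set.mem_iUnion.2 ⟨j, ?_⟩
        rcases eq_or_ne j j₀ with hj | hj <;> simp_all
      · refine Set.mem_iUnion.2 ⟨j₀, ?_⟩
        simpa [R] using Or.inr ⟨hx, by simpa using hxA⟩
  · refine convexHull_mono ?_ (hq j)
    rcases eq_or_ne j j₀ with hj | hj <;> simp [hj]

theorem tverSet_one_nonempty {S : Finset E} (hS : S.Nonempty) : (TverSet 1 S).Nonempty := by
  obtain ⟨x, hx⟩ := hS
  exact ⟨x, mem_tverSet_of_pairwise_disjoint one_pos (A := fun _ => S)
    (fun j k hjk => absurd (Subsingleton.elim j k) hjk) (fun _ => subset_rfl)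
    (fun _ => subset_convexHull ℝ _ hx)⟩

end TverbergPartition

section AffineDependence

variable {ι E : Type*} [Fintype ι] [AddCommGroup E] [Module ℝ E] (p : ι → E)

/-- The affine dependences of `p` are the linear dependences of the lifted points `(1, p i)`. -/
def affineDeps : Submodule ℝ (ι → ℝ) :=
  LinearMap.ker (Fintype.linearCombination ℝ fun i => ((1 : ℝ), p i))

def baryKer (q : E) : Submodule ℝ (ι → ℝ) :=
  LinearMap.ker (Fintype.linearCombination ℝ fun i => p i - q)

/-- The Radon point of a dependence `w`: the common point of the convex hulls of
`{p i | w i > 0}` and `{p i | w i < 0}`. -/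
noncomputable def radonPoint (w : ι → ℝ) : E :=
  univ.centerMass w⁺ p

variable {p}

theorem mem_affineDeps {w : ι → ℝ} :
    w ∈ affineDeps p ↔ ∑ i, w i = 0 ∧ ∑ i, w i • p i = 0 := by
  simp [affineDeps, Fintype.linearCombination_apply, Prod.ext_iff, Prod.fst_sum, Prod.snd_sum]

theorem mem_baryKer {w : ι → ℝ} {q : E} :
    w ∈ baryKer p q ↔ ∑ i, w i • p i = (∑ i, w i) • q := by
  simp [baryKer, Fintype.linearCombination_apply, smul_sub, sum_sub_distrib, sum_smul, sub_eq_zero]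

theorem mem_affineDeps_iff_mem_baryKer {w : ι → ℝ} {q : E} :
    w ∈ affineDeps p ↔ ∑ i, w i = 0 ∧ w ∈ baryKer p q := by
  simp +contextual [mem_affineDeps, mem_baryKer]

theorem mem_baryKer_centerMass {μ : ι → ℝ} (hμ : 0 ≤ μ) :
    μ ∈ baryKer p (univ.centerMass μ p) := by
  rcases eq_or_ne (∑ i, μ i) 0 with h | h
  · simp [(Fintype.sum_eq_zero_iff_of_nonneg hμ).1 h]
  · rw [mem_baryKer, centerMass, smul_inv_smul₀ h]

theorem linearCombination_posPart_eq_negPart {w : ι → ℝ} (hw : w ∈ affineDeps p) :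
    Fintype.linearCombination ℝ (fun i => ((1 : ℝ), p i)) w⁺ =
      Fintype.linearCombination ℝ (fun i => ((1 : ℝ), p i)) w⁻ := by
  rw [← sub_eq_zero, ← map_sub, posPart_sub_negPart]
  exact hw

theorem sum_posPart_eq_sum_negPart {w : ι → ℝ} (hw : w ∈ affineDeps p) :
    ∑ i, w⁺ i = ∑ i, w⁻ i := by
  simpa [Fintype.linearCombination_apply, Prod.fst_sum] using
    congrArg Prod.fst (linearCombination_posPart_eq_negPart hw)

theorem sum_posPart_smul_eq_sum_negPart_smul {w : ι → ℝ} (hw : w ∈ affineDeps p) :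
    ∑ i, w⁺ i • p i = ∑ i, w⁻ i • p i := by
  simpa [Fintype.linearCombination_apply, Prod.snd_sum] using
    congrArg Prod.snd (linearCombination_posPart_eq_negPart hw)

theorem sum_posPart_pos {w : ι → ℝ} (hw : w ∈ affineDeps p) (hw₀ : w ≠ 0) :
    0 < ∑ i, w⁺ i := by
  refine (sum_nonneg fun i _ => posPart_nonneg (w i)).lt_of_ne' fun h => hw₀ ?_
  have hpos := (Fintype.sum_eq_zero_iff_of_nonneg (posPart_nonneg w)).1 h
  have hneg := (Fintype.sum_eq_zero_iff_of_nonneg (negPart_nonneg w)).1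
    (sum_posPart_eq_sum_negPart hw ▸ h)
  rw [← posPart_sub_negPart w, hpos, hneg, sub_zero]

theorem posPart_ne_zero_of_mem_affineDeps {w : ι → ℝ} (hw : w ∈ affineDeps p)
    (hw₀ : w ≠ 0) : w⁺ ≠ 0 := fun h => (sum_posPart_pos hw hw₀).ne' (by rw [h]; simp)

theorem radonPoint_neg {w : ι → ℝ} (hw : w ∈ affineDeps p) :
    radonPoint p (-w) = radonPoint p w := by
  simp only [radonPoint, centerMass, posPart_neg, sum_posPart_eq_sum_negPart hw,
    sum_posPart_smul_eq_sum_negPart_smul hw]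

theorem radonPoint_smul_of_pos (w : ι → ℝ) {c : ℝ} (hc : 0 < c) :
    radonPoint p (c • w) = radonPoint p w := by
  have : (c • w)⁺ = c • w⁺ := funext fun i => by
    simp [posPart_def, mul_max_of_nonneg _ _ hc.le]
  rw [radonPoint, this, centerMass_smul_left _ _ hc.ne', radonPoint]

theorem radonPoint_smul {w : ι → ℝ} (hw : w ∈ affineDeps p) {c : ℝ} (hc : c ≠ 0) :
    radonPoint p (c • w) = radonPoint p w := by
  rcases hc.lt_or_gt with hc | hc
  · rw [← neg_smul_neg, radonPoint_smul_of_pos _ (neg_pos.2 hc), radonPoint_neg hw]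
  · exact radonPoint_smul_of_pos w hc

variable (p) in
theorem card_le_finrank_affineDeps_add [Nonempty ι] :
    Fintype.card ι ≤
      finrank ℝ (affineDeps p) + finrank ℝ (vectorSpan ℝ (Set.range p)) + 1 := by
  obtain ⟨i₀⟩ := ‹Nonempty ι›
  let V := (vectorSpan ℝ (Set.range p)).map (LinearMap.inr ℝ ℝ E)
  have hrange : LinearMap.range (Fintype.linearCombination ℝ fun i => ((1 : ℝ), p i)) ≤
      (ℝ ∙ ((1 : ℝ), p i₀)) ⊔ V := by
    rw [Fintype.range_linearCombination, Submodule.span_le]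
    rintro _ ⟨i, rfl⟩
    have : ((1 : ℝ), p i) = ((1 : ℝ), p i₀) + LinearMap.inr ℝ ℝ E (p i -ᵥ p i₀) := by simp
    change ((1 : ℝ), p i) ∈ _
    rw [this]
    exact add_mem (Submodule.mem_sup_left (Submodule.mem_span_singleton_self _))
      (Submodule.mem_sup_right (Submodule.mem_map_of_mem
        (vsub_mem_vectorSpan ℝ (Set.mem_range_self i) (Set.mem_range_self i₀))))
  have hline : finrank ℝ (ℝ ∙ ((1 : ℝ), p i₀)) ≤ 1 := by
    simpa using finrank_span_le_card ({((1 : ℝ), p i₀)} : Set (ℝ × E))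
  calc Fintype.card ι
      = finrank ℝ (LinearMap.range (Fintype.linearCombination ℝ fun i => ((1 : ℝ), p i))) +
          finrank ℝ (affineDeps p) := by
        rw [affineDeps, LinearMap.finrank_range_add_finrank_ker,
          Module.finrank_fintype_fun_eq_card]
    _ ≤ finrank ℝ (ℝ ∙ ((1 : ℝ), p i₀)) + finrank ℝ V + finrank ℝ (affineDeps p) := by
        gcongr
        exact (Submodule.finrank_mono hrange).trans
          (Submodule.finrank_add_le_finrank_add_finrank _ _)
    _ ≤ _ := by
        have : finrank ℝ V ≤ _ := Submodule.finrank_map_le _ _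
        omega

end AffineDependence

section TverbergFromWeights

variable {ι E : Type*} [Fintype ι] [AddCommGroup E] [Module ℝ E] [DecidableEq E] {p : ι → E}

theorem centerMass_mem_convexHull_image_support {μ : ι → ℝ} (hμ : 0 ≤ μ)
    (hμ₀ : 0 < ∑ i, μ i) :
    univ.centerMass μ p ∈ convexHull ℝ (({i | μ i ≠ 0} : Finset ι).image p : Set E) := by
  rw [← centerMass_filter_ne_zero]
  exact centerMass_mem_convexHull _ (fun i _ => hμ i) (by rwa [sum_filter_ne_zero])
    fun i hi => mem_coe.2 (mem_image_of_mem p hi)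

theorem mem_tverSet_of_disjoint_support (hp : Injective p) {r : ℕ} (hr : 0 < r)
    {α : Fin r → ι → ℝ} {q : E} (hα : ∀ j, 0 ≤ α j) (hα₀ : ∀ j, 0 < ∑ i, α j i)
    (hq : ∀ j, univ.centerMass (α j) p = q)
    (hdisj : Pairwise fun j k => ∀ i, α j i = 0 ∨ α k i = 0) :
    q ∈ TverSet r (univ.image p) :=
  mem_tverSet_of_pairwise_disjoint hr (A := fun j => ({i | α j i ≠ 0} : Finset ι).image p)
    (fun _ _ hjk => (disjoint_image hp).2 <| disjoint_filter.2 fun i _ h =>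
      not_not.2 ((hdisj hjk i).resolve_left h))
    (fun _ => image_subset_image (subset_univ _))
    (fun j => hq j ▸ centerMass_mem_convexHull_image_support (hα j) (hα₀ j))

theorem radonPoint_mem_tverSet_two (hp : Injective p) {w : ι → ℝ} (hw : w ∈ affineDeps p)
    (hw₀ : w ≠ 0) : radonPoint p w ∈ TverSet 2 (univ.image p) := by
  have hneg : univ.centerMass w⁻ p = radonPoint p w := by
    simpa [radonPoint, posPart_neg] using radonPoint_neg hw
  refine mem_tverSet_of_disjoint_support hp two_pos (α := ![w⁺, w⁻]) ?_ ?_ ?_ ?_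
  · intro j
    fin_cases j
    exacts [posPart_nonneg w, negPart_nonneg w]
  · intro j
    have := sum_posPart_pos hw hw₀
    fin_cases j
    exacts [this, sum_posPart_eq_sum_negPart hw ▸ this]
  · intro j
    fin_cases j
    exacts [rfl, hneg]
  · intro j k hjk i
    have h := (le_total (w i) 0).imp posPart_eq_zero.2 negPart_eq_zero.2
    fin_cases j <;> fin_cases k <;> simp_all [or_comm]

end TverbergFromWeights

section RadonPointConstant

variable {ι E : Type*} [Fintype ι] [AddCommGroup E] [Module ℝ E] [TopologicalSpace E]
  [ContinuousAdd E] [ContinuousSMul ℝ E] {p : ι → E}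

theorem continuousOn_radonPoint : ContinuousOn (radonPoint p) {w | ∑ i, w⁺ i ≠ 0} := by
  have hpos : ∀ i, Continuous fun w : ι → ℝ => w⁺ i := fun i =>
    continuous_posPart.comp (continuous_apply i)
  exact ((continuous_finsetSum _ fun i _ => hpos i).continuousOn.inv₀ fun w hw => hw).smul
    (continuous_finsetSum _ fun i _ => (hpos i).smul continuous_const).continuousOn

theorem radonPoint_eq_of_isTotallyDisconnected [DecidableEq E] (hp : Injective p)
    (hT : IsTotallyDisconnected (TverSet 2 (univ.image p))) {u v : ι → ℝ}
    (hu : u ∈ affineDeps p) (hv : v ∈ affineDeps p) (hu₀ : u ≠ 0) (hv₀ : v ≠ 0) :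
    radonPoint p u = radonPoint p v := by
  rcases le_or_gt (finrank ℝ (affineDeps p)) 1 with hW | hW
  · -- `v` is a nonzero multiple of `u`
    have hW1 : finrank ℝ (affineDeps p) = 1 :=
      hW.antisymm (Submodule.one_le_finrank_iff.2 fun h => hu₀ (by simpa [h] using hu))
    obtain ⟨c, hc⟩ := (finrank_eq_one_iff_of_nonzero' (⟨u, hu⟩ : affineDeps p)
      (by simpa using hu₀)).1 hW1 ⟨v, hv⟩
    have hcv : c • u = v := congrArg Subtype.val hc
    rw [← hcv, radonPoint_smul hu (by rintro rfl; simp_all)]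
  · -- the nonzero dependences form a connected set, mapped into the totally disconnected `T_2`
    have hconn : IsPreconnected ({0}ᶜ : Set (affineDeps p)) :=
      (isConnected_compl_singleton_of_one_lt_rank (one_lt_rank_of_one_lt_finrank hW) _).2
    have hf : ContinuousOn (fun w : affineDeps p => radonPoint p w) {0}ᶜ :=
      continuousOn_radonPoint.comp continuous_subtype_val.continuousOn fun w hw =>
        (sum_posPart_pos w.2 (by simpa using hw)).ne'
    refine hT _ ?_ (hconn.image _ hf) ⟨⟨u, hu⟩, by simpa using hu₀, rfl⟩
      ⟨⟨v, hv⟩, by simpa using hv₀, rfl⟩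
    rintro _ ⟨w, hw, rfl⟩
    exact radonPoint_mem_tverSet_two hp w.2 (by simpa using hw)

theorem posPart_mem_baryKer_radonPoint [DecidableEq E] (hp : Injective p)
    (hT : IsTotallyDisconnected (TverSet 2 (univ.image p))) {u : ι → ℝ}
    (hu : u ∈ affineDeps p) (hu₀ : u ≠ 0) :
    ∀ γ ∈ affineDeps p, γ⁺ ∈ baryKer p (radonPoint p u) := by
  intro γ hγ
  rcases eq_or_ne γ 0 with rfl | hγ₀
  · simp
  · rw [radonPoint_eq_of_isTotallyDisconnected hp hT hu hγ hu₀ hγ₀]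
    exact mem_baryKer_centerMass (posPart_nonneg γ)

end RadonPointConstant

theorem IsCompact.exists_finset_extremePoints_card_eq {F : Type*} [NormedAddCommGroup F]
    [NormedSpace ℝ F] {K : Set F} (hK : IsCompact K) (hKc : Convex ℝ K) (hne : K.Nonempty) :
    ∃ t : Finset F, ↑t ⊆ K.extremePoints ℝ ∧ #t = finrank ℝ (vectorSpan ℝ K) + 1 := by
  by_cases hfin : (K.extremePoints ℝ).Finite
  · suffices finrank ℝ (vectorSpan ℝ K) + 1 ≤ #hfin.toFinset by
      obtain ⟨t, hts, htc⟩ := exists_subset_card_eq this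
      exact ⟨t, fun x hx => hfin.mem_toFinset.1 (hts hx), htc⟩
    have hKM : convexHull ℝ (K.extremePoints ℝ) = K := by
      rw [← (hfin.isClosed_convexHull (𝕜 := ℝ)).closure_eq,
        closure_convexHull_extremePoints hK hKc]
    have hspan : vectorSpan ℝ K = vectorSpan ℝ (K.extremePoints ℝ) := by
      nth_rw 1 [← hKM]
      rw [← direction_affineSpan, affineSpan_convexHull, direction_affineSpan]
    have := hfin.fintype
    have := (hK.extremePoints_nonempty hne).to_subtype
    have h := finrank_vectorSpan_range_add_one_le ℝ ((↑) : K.extremePoints ℝ → F)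
    rwa [Subtype.range_coe, ← hspan, ← Set.toFinset_card, ← hfin.toFinset_eq_toFinset] at h
  · exact Set.Infinite.exists_subset_card_eq hfin _

section ConvexWeights

variable {ι E : Type*} [Fintype ι] [AddCommGroup E] [Module ℝ E] {p : ι → E} {q : E}

variable (p q) in
def convexWeights : Set (ι → ℝ) := stdSimplex ℝ ι ∩ baryKer p q

theorem isCompact_convexWeights : IsCompact (convexWeights p q) :=
  (isCompact_stdSimplex ℝ ι).inter_right (Submodule.closed_of_finiteDimensional _)

theorem convex_convexWeights : Convex ℝ (convexWeights p q) :=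
  (convex_stdSimplex ℝ ι).inter (baryKer p q).convex

theorem centerMass_eq_of_mem_convexWeights {α : ι → ℝ} (hα : α ∈ convexWeights p q) :
    univ.centerMass α p = q := by
  obtain ⟨⟨-, hα₁⟩, hαq⟩ := hα
  rw [centerMass_eq_of_sum_1 _ _ hα₁, mem_baryKer.1 hαq, hα₁, one_smul]

theorem inv_sum_smul_mem_convexWeights {μ : ι → ℝ} (hμ : 0 ≤ μ) (hμq : μ ∈ baryKer p q)
    (hμ₀ : μ ≠ 0) : (∑ i, μ i)⁻¹ • μ ∈ convexWeights p q := by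
  have hs : 0 < ∑ i, μ i := Fintype.sum_pos (hμ.lt_of_ne (Ne.symm hμ₀))
  refine ⟨⟨fun i => smul_nonneg (inv_nonneg.2 hs.le) (hμ i), ?_⟩, Submodule.smul_mem _ _ hμq⟩
  simp [← mul_sum, inv_mul_cancel₀ hs.ne']

/-- `α` is a convex combination of the normalizations of `μ` and `α - μ`, which both lie in
`convexWeights p q`. -/
theorem eq_inv_sum_smul_of_mem_extremePoints {α μ : ι → ℝ}
    (hα : α ∈ (convexWeights p q).extremePoints ℝ) (hμ : 0 ≤ μ) (hμα : μ ≤ α)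
    (hμq : μ ∈ baryKer p q) (hμ₀ : μ ≠ 0) : α = (∑ i, μ i)⁻¹ • μ := by
  obtain ⟨⟨⟨-, hα₁⟩, hαq⟩, hext⟩ := mem_extremePoints_iff_left.1 hα
  have hν : 0 ≤ α - μ := sub_nonneg.2 hμα
  have hsum : ∑ i, μ i + ∑ i, (α - μ) i = 1 := by simp [sum_sub_distrib, hα₁]
  rcases eq_or_ne (α - μ) 0 with hν₀ | hν₀
  · rw [sub_eq_zero] at hν₀
    simp_all
  have hs : 0 < ∑ i, μ i := Fintype.sum_pos (hμ.lt_of_ne (Ne.symm hμ₀))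
  have ht : 0 < ∑ i, (α - μ) i := Fintype.sum_pos (hν.lt_of_ne (Ne.symm hν₀))
  refine (hext _ (inv_sum_smul_mem_convexWeights hμ hμq hμ₀) _
    (inv_sum_smul_mem_convexWeights hν (sub_mem hαq hμq) hν₀) ⟨_, _, hs, ht, hsum, ?_⟩).symm
  rw [smul_inv_smul₀ hs.ne', smul_inv_smul₀ ht.ne', add_sub_cancel]

theorem eq_inv_sum_smul_posPart_sub_of_mem_extremePoints
    (hq : ∀ γ ∈ affineDeps p, γ⁺ ∈ baryKer p q) {α β : ι → ℝ}
    (hα : α ∈ (convexWeights p q).extremePoints ℝ) (hβ : β ∈ convexWeights p q) (hαβ : α ≠ β) :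
    α = (∑ i, (α - β)⁺ i)⁻¹ • (α - β)⁺ := by
  obtain ⟨⟨hα₀, hα₁⟩, hαq⟩ := hα.1
  obtain ⟨⟨hβ₀, hβ₁⟩, hβq⟩ := hβ
  have hγ : α - β ∈ affineDeps p :=
    mem_affineDeps_iff_mem_baryKer.2 ⟨by simp [sum_sub_distrib, hα₁, hβ₁], sub_mem hαq hβq⟩
  exact eq_inv_sum_smul_of_mem_extremePoints hα (posPart_nonneg _)
    (sup_le (sub_le_self α hβ₀) hα₀) (hq _ hγ)
    (posPart_ne_zero_of_mem_affineDeps hγ (sub_ne_zero.2 hαβ))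

theorem disjoint_support_of_mem_extremePoints (hq : ∀ γ ∈ affineDeps p, γ⁺ ∈ baryKer p q)
    {α β : ι → ℝ} (hα : α ∈ (convexWeights p q).extremePoints ℝ)
    (hβ : β ∈ (convexWeights p q).extremePoints ℝ) (hαβ : α ≠ β) (i : ι) : α i = 0 ∨ β i = 0 := by
  rcases le_total (α i) (β i) with h | h
  · left
    rw [congrFun (eq_inv_sum_smul_posPart_sub_of_mem_extremePoints hq hα hβ.1 hαβ) i]
    simp [posPart_eq_zero.2 (sub_nonpos.2 h)]
  · right
    rw [congrFun (eq_inv_sum_smul_posPart_sub_of_mem_extremePoints hq hβ hα.1 hαβ.symm) i]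
    simp [posPart_eq_zero.2 (sub_nonpos.2 h)]

theorem affineDeps_le_vectorSpan_convexWeights
    (hq : ∀ γ ∈ affineDeps p, γ⁺ ∈ baryKer p q) :
    affineDeps p ≤ vectorSpan ℝ (convexWeights p q) := by
  intro γ hγ
  rcases eq_or_ne γ 0 with rfl | hγ₀
  · exact zero_mem _
  have hs := sum_posPart_pos hγ hγ₀
  have hpos := inv_sum_smul_mem_convexWeights (posPart_nonneg γ) (hq γ hγ)
    (posPart_ne_zero_of_mem_affineDeps hγ hγ₀)
  have hneg := inv_sum_smul_mem_convexWeights (posPart_nonneg (-γ)) (hq _ (neg_mem hγ))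
    (posPart_ne_zero_of_mem_affineDeps (neg_mem hγ) (neg_ne_zero.2 hγ₀))
  rw [posPart_neg, ← sum_posPart_eq_sum_negPart hγ] at hneg
  have hγ' : γ = (∑ i, γ⁺ i) • ((∑ i, γ⁺ i)⁻¹ • γ⁺ -ᵥ (∑ i, γ⁺ i)⁻¹ • γ⁻) := by
    rw [vsub_eq_sub, ← smul_sub, smul_inv_smul₀ hs.ne', posPart_sub_negPart]
  rw [hγ']
  exact Submodule.smul_mem _ _ (vsub_mem_vectorSpan ℝ hpos hneg)

end ConvexWeights

theorem tverSet_nonempty_of_le_finrank_affineDeps {ι E : Type*} [Fintype ι] [AddCommGroup E]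
    [Module ℝ E] [TopologicalSpace E] [ContinuousAdd E] [ContinuousSMul ℝ E] [DecidableEq E]
    {p : ι → E} (hp : Injective p) (hT : IsTotallyDisconnected (TverSet 2 (univ.image p)))
    {r : ℕ} (hr : 2 ≤ r) (hrW : r ≤ finrank ℝ (affineDeps p) + 1) :
    (TverSet r (univ.image p)).Nonempty := by
  obtain ⟨u, hu, hu₀⟩ := Submodule.exists_mem_ne_zero_of_ne_bot
    (show affineDeps p ≠ ⊥ from fun h => by rw [h, finrank_bot] at hrW; omega)
  set q := radonPoint p u
  have hq := posPart_mem_baryKer_radonPoint hp hT hu hu₀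
  obtain ⟨t, hText, htcard⟩ := isCompact_convexWeights.exists_finset_extremePoints_card_eq
    convex_convexWeights ⟨_, inv_sum_smul_mem_convexWeights (posPart_nonneg u) (hq u hu)
      (posPart_ne_zero_of_mem_affineDeps hu hu₀)⟩
  have hrt : r ≤ #t := htcard ▸ hrW.trans
    (by gcongr; exact Submodule.finrank_mono (affineDeps_le_vectorSpan_convexWeights hq))
  obtain ⟨t', ht't, ht'card⟩ := exists_subset_card_eq hrt
  let e := (t'.equivFinOfCardEq ht'card).symm
  have hext : ∀ j, (e j : ι → ℝ) ∈ (convexWeights p q).extremePoints ℝ := fun j =>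
    hText (ht't (e j).2)
  refine ⟨q, mem_tverSet_of_disjoint_support hp (α := fun j => e j) (by omega)
    (fun j => (hext j).1.1.1) (fun j => by simp [(hext j).1.1.2])
    (fun j => centerMass_eq_of_mem_convexWeights (hext j).1) fun j k hjk => ?_⟩
  exact disjoint_support_of_mem_extremePoints hq (hext j) (hext k)
    fun h => hjk (e.injective (Subtype.ext h))

theorem cascade_zero_dim_radon_set_general
    (d : ℕ) (S : Finset (Fin d → ℝ))
    (hdim : CovDimLE ↥(TverSet 2 S) 0)
    (a : ℕ) (ha : a = Module.finrank ℝ (affineSpan ℝ (S : Set (Fin d → ℝ))).direction) :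
    ∀ r : ℕ, 1 ≤ r → r ≤ S.card - a → (TverSet r S).Nonempty := by
  intro r hr hrS
  have hS : S.Nonempty := card_pos.1 (by omega)
  rcases hr.eq_or_lt with rfl | hr
  · exact tverSet_one_nonempty hS
  have himage : univ.image ((↑) : S → Fin d → ℝ) = S := by simp [univ_eq_attach]
  have := hS.to_subtype
  have hcard := card_le_finrank_affineDeps_add ((↑) : S → Fin d → ℝ)
  have hV : finrank ℝ (vectorSpan ℝ (Set.range ((↑) : S → Fin d → ℝ))) = a := by
    rw [ha, direction_affineSpan]
    exact congrArg (fun s => finrank ℝ (vectorSpan ℝ s)) Subtype.range_val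
  rw [hV, Fintype.card_coe] at hcard
  rw [← himage] at hdim ⊢
  have := hdim.totallySeparatedSpace
  exact tverSet_nonempty_of_le_finrank_affineDeps Subtype.val_injective
    (totallyDisconnectedSpace_subtype_iff.1 inferInstance) hr (by omega)

theorem cascade_zero_dim_radon_set
    (d : ℕ) (hd : 0 < d) (S : Finset (Fin d → ℝ)) (hS : S.Nonempty)
    (hdim : CovDimLE ↥(TverSet 2 S) 0)
    (a : ℕ) (ha : a = Module.finrank ℝ (affineSpan ℝ (S : Set (Fin d → ℝ))).direction) :
    ∀ r : ℕ, 1 ≤ r → r ≤ S.card - a → (TverSet r S).Nonempty :=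
  cascade_zero_dim_radon_set_general d S hdim a ha
end

section
/- Let x_1, …, x_N be points in ℝ^d and let W = {α ∈ ℝ^N : Σ_i α_i = 0 and Σ_i α_i x_i = 0} be the space of affine dependences among them. Assume that every α ∈ W satisfies Σ_i max(α_i, 0) · x_i = 0 (that is, every affine dependence has Radon point 0). Let φ : W → ℝ be a nonzero linear functional and let B = {i ∈ {1,…,N} : there exists c ≠ 0 with α_i = c·φ(α) for all α ∈ W}. If B is non-empty, then 0 ∈ conv{x_i : i ∈ B}. -/
lemma abs_add_abs_sub_of_le {A B : ℝ} (h : |A| ≤ |B|) : |A + B| + |A - B| = 2 * |B| := by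
  rcases le_total 0 B with hB | hB
  · rw [abs_of_nonneg hB] at h
    have h' := abs_le.1 h
    rw [abs_of_nonneg hB, abs_of_nonneg (by linarith [h'.1]), abs_of_nonpos (by linarith [h'.2])]
    ring
  · rw [abs_of_nonpos hB] at h
    have h' := abs_le.1 h
    rw [abs_of_nonpos hB, abs_of_nonpos (by linarith [h'.2]), abs_of_nonneg (by linarith [h'.1])]
    ring

theorem block_contains_origin
    (N d : ℕ) (x : Fin N → Fin d → ℝ)
    (W : Set (Fin N → ℝ))
    (hW : W = {α | (∑ i, α i) = 0 ∧ (∑ i, α i • x i) = 0})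
    (hRadon : ∀ α ∈ W, (∑ i, max (α i) 0 • x i) = 0)
    (φ : (Fin N → ℝ) →ₗ[ℝ] ℝ) (hφ : ∃ α ∈ W, φ α ≠ 0)
    (B : Set (Fin N))
    (hB : B = {i | ∃ c : ℝ, c ≠ 0 ∧ ∀ α ∈ W, α i = c * φ α})
    (hBne : B.Nonempty) :
    (0 : Fin d → ℝ) ∈ convexHull ℝ (x '' B) := by
  classical
  have hmem : ∀ β : Fin N → ℝ, β ∈ W ↔ ((∑ i, β i) = 0 ∧ (∑ i, β i • x i) = 0) := by
    intro β; rw [hW]; exact Iff.rfl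
  have h0W : (0 : Fin N → ℝ) ∈ W := by
    rw [hmem]; constructor <;> simp
  have hadd : ∀ β γ, β ∈ W → γ ∈ W → β + γ ∈ W := by
    intro β γ hβ hγ
    rw [hmem] at hβ hγ ⊢
    constructor
    · simp only [Pi.add_apply, Finset.sum_add_distrib, hβ.1, hγ.1, add_zero]
    · simp only [Pi.add_apply, add_smul, Finset.sum_add_distrib, hβ.2, hγ.2, add_zero]
  have hsmul : ∀ (c : ℝ) β, β ∈ W → c • β ∈ W := by
    intro c β hβ
    rw [hmem] at hβ ⊢
    constructor
    · simp only [Pi.smul_apply, smul_eq_mul, ← Finset.mul_sum, hβ.1, mul_zero]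
    · simp only [Pi.smul_apply, smul_eq_mul, mul_smul, ← Finset.smul_sum, hβ.2, smul_zero]
  -- every dependence: sum of |β i| • x i is zero
  have habs : ∀ β, β ∈ W → (∑ i, |β i| • x i) = 0 := by
    intro β hβ
    have hneg : -β ∈ W := by
      have := hsmul (-1) β hβ
      simpa using this
    have h1 := hRadon β hβ
    have h2 := hRadon (-β) hneg
    simp only [Pi.neg_apply] at h2
    have key : ∀ i : Fin N, |β i| • x i = max (β i) 0 • x i + max (-β i) 0 • x i := by
      intro i
      rcases le_total 0 (β i) with h | h
      · rw [abs_of_nonneg h, max_eq_left h, max_eq_right (by linarith), zero_smul, add_zero]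
      · rw [abs_of_nonpos h, max_eq_right h, max_eq_left (by linarith), zero_smul, zero_add]
    calc (∑ i, |β i| • x i) = ∑ i, (max (β i) 0 • x i + max (-β i) 0 • x i) :=
          Finset.sum_congr rfl (fun i _ => key i)
      _ = (∑ i, max (β i) 0 • x i) + ∑ i, max (-β i) 0 • x i := Finset.sum_add_distrib
      _ = 0 := by rw [h1, h2, add_zero]
  -- key step: zeroing out coordinates where δ vanishes
  have hzero : ∀ a, a ∈ W → ∀ δ, δ ∈ W →
      (∑ i, (if δ i = 0 then |a i| else 0) • x i) = 0 := by
    intro a ha δ hδ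
    set t : ℝ := ∑ i, |a i| / |δ i| with ht_def
    have ht0 : 0 ≤ t :=
      Finset.sum_nonneg (fun i _ => div_nonneg (abs_nonneg _) (abs_nonneg _))
    have htb : ∀ i, δ i ≠ 0 → |a i| ≤ t * |δ i| := by
      intro i hi
      have h2 : 0 < |δ i| := abs_pos.2 hi
      have h1 : |a i| / |δ i| ≤ t :=
        Finset.single_le_sum (f := fun j => |a j| / |δ j|)
          (fun j _ => div_nonneg (abs_nonneg _) (abs_nonneg _)) (Finset.mem_univ i)
      calc |a i| = (|a i| / |δ i|) * |δ i| := by field_simp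
        _ ≤ t * |δ i| := mul_le_mul_of_nonneg_right h1 h2.le
    have h1 := habs (a + t • δ) (hadd _ _ ha (hsmul t δ hδ))
    have h2 := habs (a + (-t) • δ) (hadd _ _ ha (hsmul (-t) δ hδ))
    simp only [Pi.add_apply, Pi.smul_apply, smul_eq_mul] at h1 h2
    have h2' : (∑ i, |a i - t * δ i| • x i) = 0 := by
      rw [← h2]
      refine Finset.sum_congr rfl (fun i _ => ?_)
      rw [neg_mul, ← sub_eq_add_neg]
    have key : ∀ i : Fin N,
        |a i + t * δ i| • x i + |a i - t * δ i| • x i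
          = (2:ℝ) • ((if δ i = 0 then |a i| else 0) • x i) + (2*t) • (|δ i| • x i) := by
      intro i
      by_cases hi : δ i = 0
      · rw [hi, if_pos rfl]
        simp only [mul_zero, add_zero, sub_zero, abs_zero, smul_zero, add_zero]
        module
      · have hle : |a i| ≤ |t * δ i| := by
          rw [abs_mul, abs_of_nonneg ht0]; exact htb i hi
        have heq := abs_add_abs_sub_of_le hle
        rw [if_neg hi, zero_smul, smul_zero, zero_add, ← add_smul, heq,
          abs_mul, abs_of_nonneg ht0, smul_smul, mul_assoc]
    have hsum : (0 : Fin d → ℝ)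
        = (2:ℝ) • (∑ i, (if δ i = 0 then |a i| else 0) • x i) + (2*t) • (∑ i, |δ i| • x i) := by
      rw [Finset.smul_sum, Finset.smul_sum, ← Finset.sum_add_distrib,
        ← Finset.sum_congr rfl (fun i _ => key i), Finset.sum_add_distrib, h1, h2', add_zero]
    rw [habs δ hδ, smul_zero, add_zero] at hsum
    have := hsum.symm
    rcases smul_eq_zero.1 this with h | h
    · norm_num at h
    · exact h
  -- generic element of W ∩ ker φ
  have hgen : ∀ s : Finset (Fin N), ∃ δ, δ ∈ W ∧ φ δ = 0 ∧
      ∀ i ∈ s, (∃ γ, γ ∈ W ∧ φ γ = 0 ∧ γ i ≠ 0) → δ i ≠ 0 := by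
    intro s
    induction s using Finset.induction_on with
    | empty => exact ⟨0, h0W, map_zero φ, by simp⟩
    | @insert j s hj ih =>
      obtain ⟨δ, hδW, hδφ, hδ⟩ := ih
      by_cases hj' : ∃ γ, γ ∈ W ∧ φ γ = 0 ∧ γ j ≠ 0
      · obtain ⟨γ, hγW, hγφ, hγj⟩ := hj'
        obtain ⟨t, ht⟩ := Infinite.exists_notMem_finset
          ((insert j s).image (fun i => -(δ i) / γ i))
        refine ⟨δ + t • γ, hadd _ _ hδW (hsmul _ _ hγW), by simp [hδφ, hγφ], ?_⟩
        intro i hi hex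
        simp only [Pi.add_apply, Pi.smul_apply, smul_eq_mul]
        intro hcon
        by_cases hγi : γ i = 0
        · rcases Finset.mem_insert.1 hi with rfl | hi'
          · exact hγj hγi
          · exact hδ i hi' hex (by simpa [hγi] using hcon)
        · apply ht
          refine Finset.mem_image.2 ⟨i, hi, ?_⟩
          field_simp
          linarith [hcon]
      · refine ⟨δ, hδW, hδφ, ?_⟩
        intro i hi hex
        rcases Finset.mem_insert.1 hi with rfl | hi'
        · exact absurd hex hj'
        · exact hδ i hi' hex
  obtain ⟨δ, hδW, hδφ, hδgen⟩ := hgen Finset.univ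
  have hZ : ∀ i, δ i = 0 → ∀ γ, γ ∈ W → φ γ = 0 → γ i = 0 := by
    intro i hδi γ hγ hφγ
    by_contra hne
    exact hδgen i (Finset.mem_univ i) ⟨γ, hγ, hφγ, hne⟩ hδi
  -- normalized α with φ α = 1
  obtain ⟨α₀, hα₀W, hα₀φ⟩ := hφ
  set a : Fin N → ℝ := (φ α₀)⁻¹ • α₀ with ha_def
  have haW : a ∈ W := hsmul _ _ hα₀W
  have haφ : φ a = 1 := by
    rw [ha_def, map_smul, smul_eq_mul, inv_mul_cancel₀ hα₀φ]
  -- indices with δ i = 0 and a i ≠ 0 are in B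
  have hBsub : ∀ i, δ i = 0 → a i ≠ 0 → i ∈ B := by
    intro i hδi hai
    rw [hB]
    refine ⟨a i, hai, ?_⟩
    intro β hβ
    have hmem' : β + (-(φ β)) • a ∈ W := hadd _ _ hβ (hsmul _ _ haW)
    have hφ' : φ (β + (-(φ β)) • a) = 0 := by
      simp [haφ]
    have h0 := hZ i hδi _ hmem' hφ'
    simp only [Pi.add_apply, Pi.smul_apply, smul_eq_mul] at h0
    linarith [h0, mul_comm (φ β) (a i)]
  -- the witness from B
  obtain ⟨i₀, hi₀B⟩ := hBne
  have hi₀B' := hi₀B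
  rw [hB] at hi₀B'
  obtain ⟨c, hc, hcall⟩ := hi₀B'
  have hai₀ : a i₀ ≠ 0 := by
    rw [hcall a haW, haφ, mul_one]; exact hc
  have hδi₀ : δ i₀ = 0 := by
    rw [hcall δ hδW, hδφ, mul_zero]
  -- final assembly
  set s : Finset (Fin N) := Finset.univ.filter (fun i => δ i = 0 ∧ a i ≠ 0) with hs_def
  have hs0 : (∑ i ∈ s, |a i| • x i) = 0 := by
    have h := hzero a haW δ hδW
    calc (∑ i ∈ s, |a i| • x i)
        = ∑ i, (if δ i = 0 ∧ a i ≠ 0 then |a i| • x i else 0) := by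
          rw [hs_def, Finset.sum_filter]
      _ = ∑ i, (if δ i = 0 then |a i| else 0) • x i := by
          refine Finset.sum_congr rfl (fun i _ => ?_)
          by_cases h1 : δ i = 0
          · by_cases h2 : a i = 0
            · rw [if_neg (by simp [h2]), if_pos h1, h2, abs_zero, zero_smul]
            · rw [if_pos ⟨h1, h2⟩, if_pos h1]
          · rw [if_neg (by tauto), if_neg h1, zero_smul]
      _ = 0 := h
  have hi₀s : i₀ ∈ s := by
    rw [hs_def]; simp [hδi₀, hai₀]
  have hwpos : 0 < ∑ i ∈ s, |a i| :=
    Finset.sum_pos' (fun i _ => abs_nonneg _) ⟨i₀, hi₀s, abs_pos.2 hai₀⟩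
  have hz : ∀ i ∈ s, x i ∈ x '' B := by
    intro i hi
    rw [hs_def, Finset.mem_filter] at hi
    exact ⟨i, hBsub i hi.2.1 hi.2.2, rfl⟩
  have hcm := Finset.centerMass_mem_convexHull s (fun i _ => abs_nonneg (a i)) hwpos hz
  rw [Finset.centerMass, hs0, smul_zero] at hcm
  exact hcm
end

section
/- Let d be a positive integer and S ⊆ ℝ^d a finite set with at least d + 3 points whose affine span is all of ℝ^d. Then T_2(S) is non-empty and connected. -/
theorem radon_set_connected
    (d : ℕ) (hd : 0 < d) (S : Finset (Fin d → ℝ))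
    (hcard : d + 3 ≤ S.card)
    (hspan : affineSpan ℝ (S : Set (Fin d → ℝ)) = ⊤) :
    (TverSet 2 S).Nonempty ∧ IsConnected (TverSet 2 S) := by
  classical
  -- The linear map recording affine dependences of `S`.
  let f : ((↥S) → ℝ) →ₗ[ℝ] ((Fin d → ℝ) × ℝ) :=
    { toFun := fun c => (∑ s : ↥S, c s • (s : Fin d → ℝ), ∑ s : ↥S, c s)
      map_add' := by
        intro a b
        simp [add_smul, Finset.sum_add_distrib, Prod.ext_iff]
      map_smul' := by
        intro r a
        simp [smul_smul, Finset.smul_sum, Finset.mul_sum, Prod.ext_iff] }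
  let U : Set ((↥S) → ℝ) := {c | c ∈ LinearMap.ker f ∧ c ≠ 0}
  let g : ((↥S) → ℝ) → (Fin d → ℝ) := fun c =>
    (∑ s : ↥S, max (c s) 0)⁻¹ • ∑ s : ↥S, max (c s) 0 • (s : Fin d → ℝ)
  have hker_sum : ∀ c ∈ U, ∑ s : ↥S, c s = 0 := by
    rintro c ⟨hker, -⟩
    exact congrArg Prod.snd (LinearMap.mem_ker.mp hker)
  have hker_vec : ∀ c ∈ U, ∑ s : ↥S, c s • (s : Fin d → ℝ) = 0 := by
    rintro c ⟨hker, -⟩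
    exact congrArg Prod.fst (LinearMap.mem_ker.mp hker)
  have hpos : ∀ c ∈ U, 0 < ∑ s : ↥S, max (c s) 0 := by
    intro c hc
    have hsum := hker_sum c hc
    have hnonneg : 0 ≤ ∑ s : ↥S, max (c s) 0 :=
      Finset.sum_nonneg fun s _ => le_max_right _ _
    rcases hnonneg.lt_or_eq with h | h
    · exact h
    · exfalso
      apply hc.2
      have hz : ∀ s : ↥S, max (c s) 0 = 0 := fun s =>
        (Finset.sum_eq_zero_iff_of_nonneg (fun s _ => le_max_right (c s) 0)).mp h.symm s
          (Finset.mem_univ s)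
      have hle : ∀ s : ↥S, c s ≤ 0 := fun s => max_eq_right_iff.mp (hz s)
      funext s
      exact (Finset.sum_eq_zero_iff_of_nonpos (fun s _ => hle s)).mp hsum s (Finset.mem_univ s)
  have hneg_sum : ∀ c ∈ U, ∑ s : ↥S, max (-c s) 0 = ∑ s : ↥S, max (c s) 0 := by
    intro c hc
    have : ∑ s : ↥S, (max (c s) 0 - max (-c s) 0) = 0 := by
      simp only [max_zero_sub_max_neg_zero_eq_self]
      exact hker_sum c hc
    rw [Finset.sum_sub_distrib] at this
    linarith
  have hneg_vec : ∀ c ∈ U,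
      ∑ s : ↥S, max (-c s) 0 • (s : Fin d → ℝ) = ∑ s : ↥S, max (c s) 0 • (s : Fin d → ℝ) := by
    intro c hc
    have : ∑ s : ↥S, (max (c s) 0 - max (-c s) 0) • (s : Fin d → ℝ) = 0 := by
      simp only [max_zero_sub_max_neg_zero_eq_self]
      exact hker_vec c hc
    simp only [sub_smul, Finset.sum_sub_distrib, sub_eq_zero] at this
    exact this.symm
  -- main set identity
  have hf : ∀ c, f c = (∑ s : ↥S, c s • (s : Fin d → ℝ), ∑ s : ↥S, c s) := fun c => rfl
  have hU : U = {c | c ∈ LinearMap.ker f ∧ c ≠ 0} := rfl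
  have hg : ∀ c, g c = (∑ s : ↥S, max (c s) 0)⁻¹ • ∑ s : ↥S, max (c s) 0 • (s : Fin d → ℝ) :=
    fun c => rfl
  have key : TverSet 2 S = g '' U := by
    apply Set.Subset.antisymm
    · -- TverSet ⊆ g '' U
      rintro p ⟨A, hdisj, hunion, hmem⟩
      have hd01 : Disjoint (A 0) (A 1) := hdisj 0 1 (by decide)
      have hsub0 : A 0 ⊆ S := by
        intro x hx
        have : (x : Fin d → ℝ) ∈ (⋃ i, ((A i : Set (Fin d → ℝ)))) :=
          Set.mem_iUnion.mpr ⟨0, by exact_mod_cast hx⟩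
        rw [hunion] at this
        exact_mod_cast this
      have hsub1 : A 1 ⊆ S := by
        intro x hx
        have : (x : Fin d → ℝ) ∈ (⋃ i, ((A i : Set (Fin d → ℝ)))) :=
          Set.mem_iUnion.mpr ⟨1, by exact_mod_cast hx⟩
        rw [hunion] at this
        exact_mod_cast this
      have hcover : ∀ x ∈ S, x ∈ A 0 ∨ x ∈ A 1 := by
        intro x hx
        have : (x : Fin d → ℝ) ∈ (⋃ i, ((A i : Set (Fin d → ℝ)))) := by
          rw [hunion]; exact_mod_cast hx
        rcases Set.mem_iUnion.mp this with ⟨i, hi⟩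
        fin_cases i
        · exact Or.inl (by exact_mod_cast hi)
        · exact Or.inr (by exact_mod_cast hi)
      have h0 := hmem 0
      have h1 := hmem 1
      rw [Finset.convexHull_eq] at h0 h1
      obtain ⟨w0, hw0, hw0sum, hw0cm⟩ := h0
      obtain ⟨w1, hw1, hw1sum, hw1cm⟩ := h1
      have hp0 : ∑ y ∈ A 0, w0 y • y = p := by
        rw [Finset.centerMass, hw0sum] at hw0cm; simpa using hw0cm
      have hp1 : ∑ y ∈ A 1, w1 y • y = p := by
        rw [Finset.centerMass, hw1sum] at hw1cm; simpa using hw1cm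
      set c : (↥S) → ℝ := fun s =>
        (if (s : Fin d → ℝ) ∈ A 0 then w0 s else 0) - (if (s : Fin d → ℝ) ∈ A 1 then w1 s else 0)
        with hc
      have hsum0 : ∑ s : ↥S, (if (s : Fin d → ℝ) ∈ A 0 then w0 s else 0) = 1 := by
        rw [Finset.sum_coe_sort S (fun x => if x ∈ A 0 then w0 x else 0),
          Finset.sum_ite_mem, Finset.inter_eq_right.mpr hsub0, hw0sum]
      have hsum1 : ∑ s : ↥S, (if (s : Fin d → ℝ) ∈ A 1 then w1 s else 0) = 1 := by
        rw [Finset.sum_coe_sort S (fun x => if x ∈ A 1 then w1 x else 0),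
          Finset.sum_ite_mem, Finset.inter_eq_right.mpr hsub1, hw1sum]
      have hvec0 : ∑ s : ↥S, (if (s : Fin d → ℝ) ∈ A 0 then w0 s else 0) • (s : Fin d → ℝ) = p := by
        rw [Finset.sum_coe_sort S (fun x => (if x ∈ A 0 then w0 x else 0) • x)]
        simp only [ite_smul, zero_smul]
        rw [Finset.sum_ite_mem, Finset.inter_eq_right.mpr hsub0]
        exact hp0
      have hvec1 : ∑ s : ↥S, (if (s : Fin d → ℝ) ∈ A 1 then w1 s else 0) • (s : Fin d → ℝ) = p := by
        rw [Finset.sum_coe_sort S (fun x => (if x ∈ A 1 then w1 x else 0) • x)]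
        simp only [ite_smul, zero_smul]
        rw [Finset.sum_ite_mem, Finset.inter_eq_right.mpr hsub1]
        exact hp1
      have hcU : c ∈ U := by
        rw [hU]
        refine ⟨?_, ?_⟩
        · rw [LinearMap.mem_ker, hf, Prod.ext_iff]
          constructor
          · simp only [hc, sub_smul, Finset.sum_sub_distrib, hvec0, hvec1, sub_self]
            rfl
          · simp only [hc, Finset.sum_sub_distrib, hsum0, hsum1, sub_self]
            rfl
        · intro h0
          have hz : ∀ x ∈ A 0, w0 x = 0 := by
            intro x hx
            have hxS : x ∈ S := hsub0 hx
            have hx1 : x ∉ A 1 := Finset.disjoint_left.mp hd01 hx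
            have := congrFun h0 ⟨x, hxS⟩
            simpa [hc, hx, hx1] using this
          rw [Finset.sum_eq_zero hz] at hw0sum
          exact one_ne_zero hw0sum.symm
      have hmax : ∀ s : ↥S, max (c s) 0 = (if (s : Fin d → ℝ) ∈ A 0 then w0 s else 0) := by
        intro s
        by_cases h : (s : Fin d → ℝ) ∈ A 0
        · have hx1 : (s : Fin d → ℝ) ∉ A 1 := Finset.disjoint_left.mp hd01 h
          simp only [hc, h, if_true, hx1, if_false, sub_zero]
          exact max_eq_left (hw0 _ h)
        · have hx1 : (s : Fin d → ℝ) ∈ A 1 := (hcover s s.2).resolve_left h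
          simp only [hc, h, if_false, hx1, if_true, zero_sub]
          exact max_eq_right (neg_nonpos.mpr (hw1 _ hx1))
      refine ⟨c, hcU, ?_⟩
      rw [hg]
      simp only [hmax]
      rw [hsum0, hvec0, inv_one, one_smul]
    · -- g '' U ⊆ TverSet
      rintro _ ⟨c, hc, rfl⟩
      set t := ∑ s : ↥S, max (c s) 0 with ht
      have htpos := hpos c hc
      set w : (Fin d → ℝ) → ℝ := fun x => if h : x ∈ S then c ⟨x, h⟩ else 0 with hw
      have hwc : ∀ s : ↥S, w (s : Fin d → ℝ) = c s := fun s => dif_pos s.2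
      set A0 : Finset (Fin d → ℝ) := S.filter (fun x => 0 < w x) with hA0
      set A1 : Finset (Fin d → ℝ) := S.filter (fun x => ¬ 0 < w x) with hA1
      have hsum_max : ∑ x ∈ A0, max (w x) 0 = t := by
        rw [hA0, Finset.sum_filter]
        rw [Finset.sum_congr rfl (fun x _ => ?_), ← Finset.sum_coe_sort S (fun x => max (w x) 0)]
        · simp only [hwc, ht]
        · split_ifs with h
          · rfl
          · exact (max_eq_right (not_lt.mp h)).symm
      have hvec_max : ∑ x ∈ A0, max (w x) 0 • x = ∑ s : ↥S, max (c s) 0 • (s : Fin d → ℝ) := by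
        rw [hA0, Finset.sum_filter]
        rw [Finset.sum_congr rfl (fun x _ => ?_),
          ← Finset.sum_coe_sort S (fun x => max (w x) 0 • x)]
        · simp only [hwc]
        · split_ifs with h
          · rfl
          · rw [max_eq_right (not_lt.mp h), zero_smul]
      have hsum_neg : ∑ x ∈ A1, max (-w x) 0 = t := by
        rw [hA1, Finset.sum_filter]
        rw [Finset.sum_congr rfl (fun x _ => ?_), ← Finset.sum_coe_sort S (fun x => max (-w x) 0)]
        · simp only [hwc]
          exact hneg_sum c hc
        · split_ifs with h
          · exact (max_eq_right (neg_nonpos.mpr h.le)).symm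
          · rfl
      have hvec_neg : ∑ x ∈ A1, max (-w x) 0 • x = ∑ s : ↥S, max (c s) 0 • (s : Fin d → ℝ) := by
        rw [hA1, Finset.sum_filter]
        rw [Finset.sum_congr rfl (fun x _ => ?_),
          ← Finset.sum_coe_sort S (fun x => max (-w x) 0 • x)]
        · simp only [hwc]
          exact hneg_vec c hc
        · split_ifs with h
          · rw [max_eq_right (neg_nonpos.mpr h.le), zero_smul]
          · rfl
      refine ⟨![A0, A1], ?_, ?_, ?_⟩
      · intro i j hij
        fin_cases i <;> fin_cases j <;>
          simp only [Matrix.cons_val_zero, Matrix.cons_val_one, Matrix.head_cons] <;>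
          first
            | exact absurd rfl hij
            | exact Finset.disjoint_filter_filter_not S S _
            | exact (Finset.disjoint_filter_filter_not S S _).symm
      · ext x
        simp only [Set.mem_iUnion, Fin.exists_fin_two, Matrix.cons_val_zero, Matrix.cons_val_one,
          Matrix.head_cons, Finset.mem_coe, hA0, hA1, Finset.mem_filter]
        tauto
      · intro i
        fin_cases i <;>
          simp only [Matrix.cons_val_zero, Matrix.cons_val_one, Matrix.head_cons]
        · have hcm := Finset.centerMass_mem_convexHull (s := (A0 : Set (Fin d → ℝ))) A0
            (w := fun x => max (w x) 0) (fun i _ => le_max_right _ _)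
            (by rw [hsum_max]; exact htpos) (z := id) (fun x hx => Finset.mem_coe.mpr hx)
          rw [Finset.centerMass] at hcm
          simp only [id] at hcm
          rw [hsum_max, hvec_max] at hcm
          rw [hg]
          exact hcm
        · have hcm := Finset.centerMass_mem_convexHull (s := (A1 : Set (Fin d → ℝ))) A1
            (w := fun x => max (-w x) 0) (fun i _ => le_max_right _ _)
            (by rw [hsum_neg]; exact htpos) (z := id) (fun x hx => Finset.mem_coe.mpr hx)
          rw [Finset.centerMass] at hcm
          simp only [id] at hcm
          rw [hsum_neg, hvec_neg] at hcm
          rw [hg]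
          exact hcm
  -- dimension of the kernel is at least 2
  have hrank : 1 < Module.rank ℝ ↥(LinearMap.ker f) := by
    have h1 : Module.finrank ℝ ((↥S) → ℝ) = S.card := by
      simp [Module.finrank_pi]
    have h2 := LinearMap.finrank_range_add_finrank_ker f
    have h3 : Module.finrank ℝ ↥(LinearMap.range f) ≤ d + 1 := by
      have := Submodule.finrank_le (LinearMap.range f)
      simpa [Module.finrank_prod, Module.finrank_pi] using this
    have h4 : 2 ≤ Module.finrank ℝ ↥(LinearMap.ker f) := by omega
    have h5 := Module.finrank_eq_rank ℝ ↥(LinearMap.ker f)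
    rw [← h5]
    exact_mod_cast (by omega : 1 < Module.finrank ℝ ↥(LinearMap.ker f))
  -- U is connected
  have hUconn : IsConnected U := by
    have h0 : IsConnected ({(0 : ↥(LinearMap.ker f))}ᶜ : Set ↥(LinearMap.ker f)) :=
      isConnected_compl_singleton_of_one_lt_rank hrank 0
    have himg : U = Subtype.val '' ({(0 : ↥(LinearMap.ker f))}ᶜ : Set ↥(LinearMap.ker f)) := by
      ext c
      constructor
      · rintro ⟨hker, hne⟩
        exact ⟨⟨c, hker⟩, by simpa using hne, rfl⟩
      · rintro ⟨⟨c, hker⟩, hne, rfl⟩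
        exact ⟨hker, by simpa using hne⟩
    rw [himg]
    exact h0.image _ continuous_subtype_val.continuousOn
  -- g is continuous on U
  have hgcont : ContinuousOn g U := by
    have hden : Continuous fun c : (↥S) → ℝ => ∑ s : ↥S, max (c s) 0 :=
      continuous_finset_sum _ fun s _ => (continuous_apply s).max continuous_const
    have hnum : Continuous fun c : (↥S) → ℝ => ∑ s : ↥S, max (c s) 0 • (s : Fin d → ℝ) :=
      continuous_finset_sum _ fun s _ => ((continuous_apply s).max continuous_const).smul
        continuous_const
    exact ((hden.continuousOn.inv₀ fun c hc => (hpos c hc).ne').smul hnum.continuousOn)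
  have hfin : IsConnected (TverSet 2 S) := by
    rw [key]
    exact hUconn.image g hgcont
  exact ⟨hfin.nonempty, hfin⟩
end

section
/- Let t be a positive integer and k a non-negative integer. Let X and Y be compact metric spaces and ρ : X → Y a continuous map. Assume every finite open cover of Y admits a finite open refinement in which any k+2 distinct members have empty intersection (covering dimension of Y at most k). Let {O_i}_{i ∈ I} be a finite family of open subsets of X such that for every y ∈ Y there is a subset I_y ⊆ I with |I_y| ≤ t and ρ^{-1}(y) ⊆ ⋃_{i ∈ I_y} O_i. Then there exists a finite open cover 𝒲 of X such that every member of 𝒲 is contained in some O_i, and any t(k+1) + 1 distinct members of 𝒲 have empty intersection. -/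
theorem fiberwise_cover_refinement
    (t k : ℕ) (ht : 0 < t)
    (X Y : Type*) [MetricSpace X] [CompactSpace X] [MetricSpace Y] [CompactSpace Y]
    (ρ : X → Y) (hρ : Continuous ρ)
    (hdim : CovDimLE Y k)
    (I : Type*) [Fintype I] (O : I → Set X) (hO : ∀ i, IsOpen (O i))
    (hfib : ∀ y : Y, ∃ J : Finset I, J.card ≤ t ∧ ρ ⁻¹' {y} ⊆ ⋃ i ∈ J, O i) :
    ∃ 𝒲 : Finset (Set X), (∀ W ∈ 𝒲, IsOpen W) ∧ ⋃₀ (𝒲 : Set (Set X)) = Set.univ ∧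
      (∀ W ∈ 𝒲, ∃ i, W ⊆ O i) ∧
      ∀ 𝒮 : Finset (Set X), 𝒮 ⊆ 𝒲 → t * (k + 1) + 1 ≤ 𝒮.card →
        ⋂₀ (𝒮 : Set (Set X)) = ∅ := by
  classical
  rcases isEmpty_or_nonempty I with hI | hI
  · -- no indices: X must be empty
    have hXempty : IsEmpty X := by
      by_contra h
      rw [not_isEmpty_iff] at h
      obtain ⟨x⟩ := h
      obtain ⟨Jy, _, hsub⟩ := hfib (ρ x)
      have := hsub (by simp : x ∈ ρ ⁻¹' {ρ x})
      simp only [Set.mem_iUnion] at this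
      obtain ⟨i, _⟩ := this
      exact hI.elim i
    refine ⟨∅, by simp, ?_, by simp, ?_⟩
    · simp only [Finset.coe_empty, Set.sUnion_empty]
      exact (Set.univ_eq_empty_iff.2 hXempty).symm
    · intro 𝒮 h𝒮 hcard
      have : 𝒮 = ∅ := Finset.subset_empty.1 h𝒮
      subst this
      simp at hcard
  choose J0 hJ0card hJ0sub using hfib
  -- tube neighborhoods
  set U : Y → Set Y := fun y => (ρ '' (⋃ i ∈ J0 y, O i)ᶜ)ᶜ with hU
  have hUopen : ∀ y, IsOpen (U y) := by
    intro y
    have hcl : IsClosed ((⋃ i ∈ J0 y, O i)ᶜ) :=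
      (isOpen_biUnion fun i _ => hO i).isClosed_compl
    exact ((hcl.isCompact.image hρ).isClosed).isOpen_compl
  have hyU : ∀ y, y ∈ U y := by
    intro y hy
    obtain ⟨x, hx, hxy⟩ := hy
    exact hx (hJ0sub y (by simp [hxy]))
  have hUsub : ∀ y, ρ ⁻¹' (U y) ⊆ ⋃ i ∈ J0 y, O i := by
    intro y x hx
    by_contra hxc
    exact hx ⟨x, hxc, rfl⟩
  -- finite subcover of Y
  obtain ⟨S, hS⟩ := isCompact_univ.elim_finite_subcover U hUopen
    (fun y _ => Set.mem_iUnion.2 ⟨y, hyU y⟩)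
  have hScover : ⋃₀ ((S.image U : Finset (Set Y)) : Set (Set Y)) = Set.univ := by
    apply Set.eq_univ_of_univ_subset
    intro y hy
    obtain ⟨s, hs1, hs2⟩ := Set.mem_iUnion₂.1 (hS (Set.mem_univ y))
    exact ⟨U s, by simp [Finset.mem_image]; exact ⟨s, hs1, rfl⟩, hs2⟩
  obtain ⟨𝒱, hVopen, hVcover, hVref, hVorder⟩ := hdim (S.image U)
    (by intro V hV; obtain ⟨s, _, rfl⟩ := Finset.mem_image.1 hV; exact hUopen s)
    hScover
  -- choose index sets for members of 𝒱
  have hJ : ∀ V : Set Y, ∃ Jf : Finset I,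
      V ∈ 𝒱 → Jf.card ≤ t ∧ ρ ⁻¹' V ⊆ ⋃ i ∈ Jf, O i := by
    intro V
    by_cases hV : V ∈ 𝒱
    · obtain ⟨U', hU', hVU⟩ := hVref V hV
      obtain ⟨s, _, rfl⟩ := Finset.mem_image.1 hU'
      refine ⟨J0 s, fun _ => ⟨hJ0card s, ?_⟩⟩
      exact (Set.preimage_mono hVU).trans (hUsub s)
    · exact ⟨∅, fun h => absurd h hV⟩
  choose J hJ using hJ
  -- the refinement of X
  refine ⟨𝒱.biUnion (fun V => (J V).image (fun i => ρ ⁻¹' V ∩ O i)), ?_, ?_, ?_, ?_⟩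
  · intro W hW
    obtain ⟨V, hV, hW⟩ := Finset.mem_biUnion.1 hW
    obtain ⟨i, _, rfl⟩ := Finset.mem_image.1 hW
    exact ((hVopen V hV).preimage hρ).inter (hO i)
  · apply Set.eq_univ_of_univ_subset
    intro x _
    have : ρ x ∈ ⋃₀ (𝒱 : Set (Set Y)) := hVcover ▸ Set.mem_univ _
    obtain ⟨V, hV, hxV⟩ := this
    have hV' : V ∈ 𝒱 := hV
    have hx2 : x ∈ ⋃ i ∈ J V, O i := (hJ V hV').2 hxV
    obtain ⟨i, hi, hxO⟩ := Set.mem_iUnion₂.1 hx2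
    exact ⟨ρ ⁻¹' V ∩ O i,
      Finset.mem_biUnion.2 ⟨V, hV', Finset.mem_image.2 ⟨i, hi, rfl⟩⟩, hxV, hxO⟩
  · intro W hW
    obtain ⟨V, hV, hW⟩ := Finset.mem_biUnion.1 hW
    obtain ⟨i, _, rfl⟩ := Finset.mem_image.1 hW
    exact ⟨i, Set.inter_subset_right⟩
  · -- the order bound
    intro 𝒮 h𝒮 h𝒮card
    by_contra hne
    obtain ⟨x, hx⟩ := Set.nonempty_iff_ne_empty.2 hne
    -- members of 𝒱 containing ρ x
    set 𝒱x := 𝒱.filter (fun V => ρ x ∈ V) with h𝒱x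
    have h𝒱xcard : 𝒱x.card ≤ k + 1 := by
      by_contra h
      push_neg at h
      obtain ⟨𝒯, h𝒯sub, h𝒯card⟩ := Finset.exists_subset_card_eq h
      have hempty := hVorder 𝒯 (h𝒯sub.trans (Finset.filter_subset _ _)) h𝒯card.ge
      have : ρ x ∈ ⋂₀ (𝒯 : Set (Set Y)) := by
        intro V hV
        exact (Finset.mem_filter.1 (h𝒯sub hV)).2
      rw [hempty] at this
      exact this
    -- choose representations
    have hmem : ∀ W ∈ 𝒮, ∃ p : Set Y × I,
        p.1 ∈ 𝒱 ∧ p.2 ∈ J p.1 ∧ W = ρ ⁻¹' p.1 ∩ O p.2 := by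
      intro W hW
      obtain ⟨V, hV, hW'⟩ := Finset.mem_biUnion.1 (h𝒮 hW)
      obtain ⟨i, hi, rfl⟩ := Finset.mem_image.1 hW'
      exact ⟨(V, i), hV, hi, rfl⟩
    choose! φ hφ1 hφ2 hφ3 using hmem
    set T : Finset (Set Y × I) :=
      𝒱x.biUnion (fun V => (J V).image (fun i => (V, i))) with hT
    have hcard : 𝒮.card ≤ T.card := by
      apply Finset.card_le_card_of_injOn φ
      · intro W hW
        have hxW : x ∈ W := hx W hW
        have hrep := hφ3 W hW
        have hρx : ρ x ∈ (φ W).1 := by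
          have := hrep ▸ hxW
          exact this.1
        refine Finset.mem_biUnion.2 ⟨(φ W).1,
          Finset.mem_filter.2 ⟨hφ1 W hW, hρx⟩,
          Finset.mem_image.2 ⟨(φ W).2, hφ2 W hW, rfl⟩⟩
      · intro W1 hW1 W2 hW2 heq
        rw [hφ3 W1 (Finset.mem_coe.1 hW1), hφ3 W2 (Finset.mem_coe.1 hW2), heq]
    have hTcard : T.card ≤ t * (k + 1) := by
      calc T.card ≤ ∑ V ∈ 𝒱x, ((J V).image (fun i => (V, i))).card :=
            Finset.card_biUnion_le
        _ ≤ ∑ V ∈ 𝒱x, t := by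
            apply Finset.sum_le_sum
            intro V hV
            exact (Finset.card_image_le).trans
              (hJ V (Finset.mem_filter.1 hV).1).1
        _ = 𝒱x.card * t := by rw [Finset.sum_const, smul_eq_mul]
        _ ≤ (k + 1) * t := Nat.mul_le_mul_right t h𝒱xcard
        _ = t * (k + 1) := Nat.mul_comm _ _
    omega
end

section
/- Let r, n be positive integers with n + 1 ≥ 2r − 1, and let x_1 < x_2 < ⋯ < x_{n+1} be real numbers, S = {x_1, …, x_{n+1}} ⊆ ℝ. Then T_r(S) is exactly the closed interval [x_r, x_{n−r+2}]. -/
theorem tverberg_set_on_line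
    (r n : ℕ) (hr : 0 < r) (hn : 2 * r - 1 ≤ n + 1)
    (x : Fin (n + 1) → ℝ) (hx : StrictMono x) :
    TverSet r (Finset.univ.image x) =
      Set.Icc (x ⟨r - 1, by omega⟩) (x ⟨n + 1 - r, by omega⟩) := by
  classical
  have hxinj : Function.Injective x := hx.injective
  ext p
  simp only [Set.mem_Icc, TverSet, Set.mem_setOf_eq]
  constructor
  · rintro ⟨A, hdisj, hcover, hconv⟩
    have hne : ∀ i, (A i).Nonempty := by
      intro i
      rcases Finset.eq_empty_or_nonempty (A i) with h | h
      · have := hconv i; rw [h] at this; simp at this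
      · exact h
    have hbounds : ∀ i, (A i).min' (hne i) ≤ p ∧ p ≤ (A i).max' (hne i) := by
      intro i
      have hsub : (A i : Set ℝ) ⊆ Set.Icc ((A i).min' (hne i)) ((A i).max' (hne i)) := by
        intro y hy
        exact ⟨Finset.min'_le _ _ (by exact_mod_cast hy),
          Finset.le_max' _ _ (by exact_mod_cast hy)⟩
      exact convexHull_min hsub (convex_Icc _ _) (hconv i)
    have hmemS : ∀ (i : Fin r) (y : ℝ), y ∈ A i → ∃ j : Fin (n + 1), x j = y := by
      intro i y hy
      have hy' : y ∈ (⋃ i, (A i : Set ℝ)) := Set.mem_iUnion.2 ⟨i, by exact_mod_cast hy⟩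
      rw [hcover] at hy'
      simpa [Finset.mem_image, eq_comm] using hy'
    constructor
    · by_contra hlt
      push_neg at hlt
      have key : ∀ i : Fin r, ∃ j : Fin (n + 1),
          x j = (A i).min' (hne i) ∧ (j : ℕ) < r - 1 := by
        intro i
        obtain ⟨j, hj⟩ := hmemS i _ (Finset.min'_mem _ (hne i))
        refine ⟨j, hj, ?_⟩
        have h1 : x j < x ⟨r - 1, by omega⟩ := lt_of_le_of_lt (hj ▸ (hbounds i).1) hlt
        have h2 := hx.lt_iff_lt.1 h1
        simpa [Fin.lt_def] using h2
      choose g hg hglt using key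
      have hginj : Function.Injective g := by
        intro i i' hii
        by_contra hne'
        have h1 : (A i).min' (hne i) ∈ A i := Finset.min'_mem _ _
        have h2 : (A i).min' (hne i) ∈ A i' := by
          have heq : (A i).min' (hne i) = (A i').min' (hne i') := by
            rw [← hg i, ← hg i', hii]
          rw [heq]; exact Finset.min'_mem _ _
        exact (Finset.disjoint_left.1 (hdisj i i' hne')) h1 h2
      have hcard : r ≤ r - 1 := by
        have hinj2 : Function.Injective
            (fun i : Fin r => (⟨(g i : ℕ), hglt i⟩ : Fin (r - 1))) := by
          intro i i' h
          apply hginj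
          apply Fin.ext
          simpa [Fin.mk.injEq] using h
        simpa using Fintype.card_le_of_injective _ hinj2
      omega
    · by_contra hlt
      push_neg at hlt
      have key : ∀ i : Fin r, ∃ j : Fin (n + 1),
          x j = (A i).max' (hne i) ∧ n + 1 - r < (j : ℕ) := by
        intro i
        obtain ⟨j, hj⟩ := hmemS i _ (Finset.max'_mem _ (hne i))
        refine ⟨j, hj, ?_⟩
        have h1 : x ⟨n + 1 - r, by omega⟩ < x j := lt_of_lt_of_le hlt (hj ▸ (hbounds i).2)
        have h2 := hx.lt_iff_lt.1 h1
        simpa [Fin.lt_def] using h2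
      choose g hg hglt using key
      have hginj : Function.Injective g := by
        intro i i' hii
        by_contra hne'
        have h1 : (A i).max' (hne i) ∈ A i := Finset.max'_mem _ _
        have h2 : (A i).max' (hne i) ∈ A i' := by
          have heq : (A i).max' (hne i) = (A i').max' (hne i') := by
            rw [← hg i, ← hg i', hii]
          rw [heq]; exact Finset.max'_mem _ _
        exact (Finset.disjoint_left.1 (hdisj i i' hne')) h1 h2
      have hcard : r ≤ r - 1 := by
        have hinj2 : Function.Injective
            (fun i : Fin r => (⟨(g i : ℕ) - (n + 2 - r),
              by have := (g i).isLt; have := hglt i; omega⟩ : Fin (r - 1))) := by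
          intro i i' h
          apply hginj
          apply Fin.ext
          have h1 := hglt i
          have h2 := hglt i'
          have h3 := congrArg Fin.val h
          simp only at h3
          omega
        simpa using Fintype.card_le_of_injective _ hinj2
      omega
  · rintro ⟨h1, h2⟩
    refine ⟨fun i => (Finset.univ.filter (fun j : Fin (n + 1) =>
        ((i : ℕ) < r - 1 ∧ ((j : ℕ) = (i : ℕ) ∨ (i : ℕ) + (j : ℕ) = n)) ∨
        ((i : ℕ) = r - 1 ∧ r - 1 ≤ (j : ℕ) ∧ (j : ℕ) + r ≤ n + 1))).image x,
      ?_, ?_, ?_⟩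
    · intro i i' hii
      rw [Finset.disjoint_left]
      intro a ha ha'
      simp only [Finset.mem_image, Finset.mem_filter, Finset.mem_univ, true_and] at ha ha'
      obtain ⟨j, hj, rfl⟩ := ha
      obtain ⟨j', hj', hjj⟩ := ha'
      have hj'' : j' = j := hxinj hjj
      subst hj''
      have hvne : (i : ℕ) ≠ (i' : ℕ) := fun h => hii (Fin.ext h)
      have hi := i.isLt
      have hi' := i'.isLt
      omega
    · ext y
      simp only [Set.mem_iUnion, Finset.coe_image, Set.mem_image, Finset.mem_coe,
        Finset.mem_filter, Finset.mem_univ, true_and, Finset.coe_filter,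
        Set.mem_setOf_eq]
      constructor
      · rintro ⟨i, j, _, rfl⟩
        exact ⟨j, rfl⟩
      · rintro ⟨j, -, rfl⟩
        by_cases hj1 : (j : ℕ) < r - 1
        · exact ⟨⟨(j : ℕ), by omega⟩, j, Or.inl ⟨hj1, Or.inl rfl⟩, rfl⟩
        · by_cases hj2 : (j : ℕ) + r ≤ n + 1
          · exact ⟨⟨r - 1, by omega⟩, j, Or.inr ⟨rfl, ⟨by omega, hj2⟩⟩, rfl⟩
          · refine ⟨⟨n - (j : ℕ), by have := j.isLt; omega⟩, j, Or.inl ⟨?_, Or.inr ?_⟩, rfl⟩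
            · simp only [Fin.val_mk]; have := j.isLt; omega
            · simp only [Fin.val_mk]; have := j.isLt; omega
    · intro i
      have hi := i.isLt
      by_cases hcase : (i : ℕ) < r - 1
      · have ha : x ⟨(i : ℕ), by omega⟩ ∈ ((Finset.univ.filter (fun j : Fin (n + 1) =>
            ((i : ℕ) < r - 1 ∧ ((j : ℕ) = (i : ℕ) ∨ (i : ℕ) + (j : ℕ) = n)) ∨
            ((i : ℕ) = r - 1 ∧ r - 1 ≤ (j : ℕ) ∧ (j : ℕ) + r ≤ n + 1))).image x : Finset ℝ) := by
          refine Finset.mem_image.2 ⟨⟨(i : ℕ), by omega⟩, Finset.mem_filter.2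
            ⟨Finset.mem_univ _, Or.inl ⟨hcase, Or.inl rfl⟩⟩, rfl⟩
        have hb : x ⟨n - (i : ℕ), by omega⟩ ∈ ((Finset.univ.filter (fun j : Fin (n + 1) =>
            ((i : ℕ) < r - 1 ∧ ((j : ℕ) = (i : ℕ) ∨ (i : ℕ) + (j : ℕ) = n)) ∨
            ((i : ℕ) = r - 1 ∧ r - 1 ≤ (j : ℕ) ∧ (j : ℕ) + r ≤ n + 1))).image x : Finset ℝ) := by
          refine Finset.mem_image.2 ⟨⟨n - (i : ℕ), by omega⟩, Finset.mem_filter.2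
            ⟨Finset.mem_univ _, Or.inl ⟨hcase, Or.inr (by simp; omega)⟩⟩, rfl⟩
        have hab : x ⟨(i : ℕ), by omega⟩ ≤ x ⟨n - (i : ℕ), by omega⟩ :=
          hx.monotone (by simp [Fin.le_def]; omega)
        apply segment_subset_convexHull (Finset.mem_coe.2 ha) (Finset.mem_coe.2 hb)
        rw [segment_eq_Icc hab]
        constructor
        · exact le_trans (hx.monotone (by simp [Fin.le_def]; omega)) h1
        · exact le_trans h2 (hx.monotone (by simp [Fin.le_def]; omega))
      · have hcase' : (i : ℕ) = r - 1 := by omega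
        have ha : x ⟨r - 1, by omega⟩ ∈ ((Finset.univ.filter (fun j : Fin (n + 1) =>
            ((i : ℕ) < r - 1 ∧ ((j : ℕ) = (i : ℕ) ∨ (i : ℕ) + (j : ℕ) = n)) ∨
            ((i : ℕ) = r - 1 ∧ r - 1 ≤ (j : ℕ) ∧ (j : ℕ) + r ≤ n + 1))).image x : Finset ℝ) := by
          refine Finset.mem_image.2 ⟨⟨r - 1, by omega⟩, Finset.mem_filter.2
            ⟨Finset.mem_univ _, Or.inr ⟨hcase', by simp; omega⟩⟩, rfl⟩
        have hb : x ⟨n + 1 - r, by omega⟩ ∈ ((Finset.univ.filter (fun j : Fin (n + 1) =>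
            ((i : ℕ) < r - 1 ∧ ((j : ℕ) = (i : ℕ) ∨ (i : ℕ) + (j : ℕ) = n)) ∨
            ((i : ℕ) = r - 1 ∧ r - 1 ≤ (j : ℕ) ∧ (j : ℕ) + r ≤ n + 1))).image x : Finset ℝ) := by
          refine Finset.mem_image.2 ⟨⟨n + 1 - r, by omega⟩, Finset.mem_filter.2
            ⟨Finset.mem_univ _, Or.inr ⟨hcase', by simp; omega⟩⟩, rfl⟩
        have hab : x ⟨r - 1, by omega⟩ ≤ x ⟨n + 1 - r, by omega⟩ := le_trans h1 h2
        apply segment_subset_convexHull (Finset.mem_coe.2 ha) (Finset.mem_coe.2 hb)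
        rw [segment_eq_Icc hab]
        exact ⟨h1, h2⟩
end

section
/- Let r, t, n be positive integers with r + t ≤ n + 1, and let x_1 < x_2 < ⋯ < x_{n+1} be real numbers, S = {x_1, …, x_{n+1}} ⊆ ℝ. Then C^t_r(S) is exactly the closed interval [x_{r+t}, x_{n−r−t+2}] (which is empty when r + t > n − r − t + 2). In particular, C^t_r(S) is non-empty if and only if n ≥ 2(r−1) + 2t. -/
/-- The `t`-th Tverberg `r`-core `C^t_r(S)`: points lying in `T_r(S \ S')` for every
`t`-element subset `S' ⊆ S`. -/
def TverCore {E : Type*} [AddCommGroup E] [Module ℝ E] [DecidableEq E]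
    (r t : ℕ) (S : Finset E) : Set E :=
  {p | ∀ S' : Finset E, S' ⊆ S → S'.card = t → p ∈ TverSet r (S \ S')}


section Helpers
open Finset


lemma counts_of_mem_tverSet {r : ℕ} {S : Finset ℝ} {p : ℝ} (h : p ∈ TverSet r S) :
    r ≤ (S.filter (fun y => y ≤ p)).card ∧ r ≤ (S.filter (fun y => p ≤ y)).card := by
  obtain ⟨A, hdisj, hunion, hconv⟩ := h
  have hne : ∀ i, (A i).Nonempty := by
    intro i
    rcases (A i).eq_empty_or_nonempty with h | h
    · exfalso; have := hconv i; rw [h] at this; simp at this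
    · exact h
  have hsub : ∀ i, A i ⊆ S := by
    intro i y hy
    have : (y : ℝ) ∈ (⋃ j, ((A j : Finset ℝ) : Set ℝ)) := Set.mem_iUnion.2 ⟨i, hy⟩
    rw [hunion] at this; exact_mod_cast this
  have hmem : ∀ i, (A i).min' (hne i) ≤ p ∧ p ≤ (A i).max' (hne i) := by
    intro i
    have h1 : ((A i : Finset ℝ) : Set ℝ) ⊆ Set.Icc ((A i).min' (hne i)) ((A i).max' (hne i)) := by
      intro y hy
      exact ⟨(A i).min'_le y hy, (A i).le_max' y hy⟩
    exact convexHull_min h1 (convex_Icc _ _) (hconv i)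
  constructor
  · have hinj : Function.Injective (fun i => (A i).min' (hne i)) := by
      intro i j hij
      by_contra hne'
      simp only at hij
      exact Finset.disjoint_left.1 (hdisj i j hne') ((A i).min'_mem (hne i)) (hij ▸ (A j).min'_mem (hne j))
    calc r = (Finset.univ.image (fun i => (A i).min' (hne i))).card := by
            rw [Finset.card_image_of_injective _ hinj, Finset.card_univ, Fintype.card_fin]
      _ ≤ _ := by
            apply Finset.card_le_card
            intro y hy
            simp only [Finset.mem_image] at hy
            obtain ⟨i, -, rfl⟩ := hy
            exact Finset.mem_filter.2 ⟨hsub i ((A i).min'_mem (hne i)), (hmem i).1⟩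
  · have hinj : Function.Injective (fun i => (A i).max' (hne i)) := by
      intro i j hij
      by_contra hne'
      simp only at hij
      exact Finset.disjoint_left.1 (hdisj i j hne') ((A i).max'_mem (hne i)) (hij ▸ (A j).max'_mem (hne j))
    calc r = (Finset.univ.image (fun i => (A i).max' (hne i))).card := by
            rw [Finset.card_image_of_injective _ hinj, Finset.card_univ, Fintype.card_fin]
      _ ≤ _ := by
            apply Finset.card_le_card
            intro y hy
            simp only [Finset.mem_image] at hy
            obtain ⟨i, -, rfl⟩ := hy
            exact Finset.mem_filter.2 ⟨hsub i ((A i).max'_mem (hne i)), (hmem i).2⟩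


lemma pair_hull {a b p : ℝ} {s : Finset ℝ} (ha : a ∈ s) (hb : b ∈ s)
    (h1 : a ≤ p) (h2 : p ≤ b) : p ∈ convexHull ℝ (s : Set ℝ) := by
  have hseg : p ∈ segment ℝ a b := by rw [segment_eq_Icc (h1.trans h2)]; exact ⟨h1, h2⟩
  exact (convex_convexHull ℝ (s : Set ℝ)).segment_subset
    (subset_convexHull ℝ (s : Set ℝ) (Finset.mem_coe.2 ha))
    (subset_convexHull ℝ (s : Set ℝ) (Finset.mem_coe.2 hb)) hseg

lemma mem_tverSet_of_counts : ∀ (r : ℕ), 1 ≤ r → ∀ (S : Finset ℝ) (p : ℝ),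
    r ≤ (S.filter (fun y => y ≤ p)).card → r ≤ (S.filter (fun y => p ≤ y)).card →
    p ∈ TverSet r S := by
  intro r
  induction r with
  | zero => omega
  | succ r ih =>
    intro _ S p hL hR
    have hSL : ∃ a ∈ S, a ≤ p := by
      have : (S.filter (fun y => y ≤ p)).Nonempty := Finset.card_pos.1 (by omega)
      obtain ⟨a, ha⟩ := this
      exact ⟨a, (Finset.mem_filter.1 ha).1, (Finset.mem_filter.1 ha).2⟩
    have hSR : ∃ b ∈ S, p ≤ b := by
      have : (S.filter (fun y => p ≤ y)).Nonempty := Finset.card_pos.1 (by omega)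
      obtain ⟨b, hb⟩ := this
      exact ⟨b, (Finset.mem_filter.1 hb).1, (Finset.mem_filter.1 hb).2⟩
    rcases Nat.eq_zero_or_pos r with rfl | hr1
    · -- base case: one part, all of S
      obtain ⟨a, haS, hap⟩ := hSL
      obtain ⟨b, hbS, hpb⟩ := hSR
      refine ⟨fun _ => S, fun i j h => absurd (Fin.fin_one_eq_zero i ▸ Fin.fin_one_eq_zero j ▸ rfl) h,
        Set.iUnion_const _, fun i => pair_hull haS hbS hap hpb⟩
    · -- inductive step
      have hS : S.Nonempty := ⟨hSL.choose, hSL.choose_spec.1⟩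
      set a := S.min' hS with ha
      set b := S.max' hS with hb
      have hap : a < p := by
        by_contra hcon
        push_neg at hcon
        have : S.filter (fun y => y ≤ p) ⊆ {a} := by
          intro y hy
          obtain ⟨hyS, hyp⟩ := Finset.mem_filter.1 hy
          have := S.min'_le y hyS
          simp only [Finset.mem_singleton]
          linarith
        have := Finset.card_le_card this
        simp only [Finset.card_singleton] at this
        omega
      have hpb : p < b := by
        by_contra hcon
        push_neg at hcon
        have : S.filter (fun y => p ≤ y) ⊆ {b} := by
          intro y hy
          obtain ⟨hyS, hyp⟩ := Finset.mem_filter.1 hy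
          have := S.le_max' y hyS
          simp only [Finset.mem_singleton]
          linarith
        have := Finset.card_le_card this
        simp only [Finset.card_singleton] at this
        omega
      have hab : a ≠ b := ne_of_lt (hap.trans hpb)
      set S' := (S.erase a).erase b with hS'
      have haS : a ∈ S := S.min'_mem hS
      have hbS : b ∈ S := S.max'_mem hS
      have hL' : r ≤ (S'.filter (fun y => y ≤ p)).card := by
        have hsub : (S.filter (fun y => y ≤ p)).erase a ⊆ S'.filter (fun y => y ≤ p) := by
          intro y hy
          obtain ⟨hya, hy2⟩ := Finset.mem_erase.1 hy
          obtain ⟨hyS, hyp⟩ := Finset.mem_filter.1 hy2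
          refine Finset.mem_filter.2 ⟨?_, hyp⟩
          exact Finset.mem_erase.2 ⟨by linarith [hyp, hpb] , Finset.mem_erase.2 ⟨hya, hyS⟩⟩
        have := Finset.card_le_card hsub
        have h2 := Finset.pred_card_le_card_erase (s := S.filter (fun y => y ≤ p)) (a := a)
        omega
      have hR' : r ≤ (S'.filter (fun y => p ≤ y)).card := by
        have hsub : (S.filter (fun y => p ≤ y)).erase b ⊆ S'.filter (fun y => p ≤ y) := by
          intro y hy
          obtain ⟨hyb, hy2⟩ := Finset.mem_erase.1 hy
          obtain ⟨hyS, hyp⟩ := Finset.mem_filter.1 hy2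
          refine Finset.mem_filter.2 ⟨?_, hyp⟩
          exact Finset.mem_erase.2 ⟨hyb, Finset.mem_erase.2 ⟨by linarith [hyp, hap], hyS⟩⟩
        have := Finset.card_le_card hsub
        have h2 := Finset.pred_card_le_card_erase (s := S.filter (fun y => p ≤ y)) (a := b)
        omega
      obtain ⟨A', hdisj', hunion', hconv'⟩ := ih hr1 S' p hL' hR'
      have hA'sub : ∀ i, A' i ⊆ S' := by
        intro i y hy
        have : (y : ℝ) ∈ (⋃ j, ((A' j : Finset ℝ) : Set ℝ)) := Set.mem_iUnion.2 ⟨i, hy⟩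
        rw [hunion'] at this; exact_mod_cast this
      refine ⟨Fin.cons {a, b} A', ?_, ?_, ?_⟩
      · have hdab : ∀ j', Disjoint ({a, b} : Finset ℝ) (A' j') := by
          intro j'
          rw [Finset.disjoint_left]
          intro y hy hy'
          have hmem := hA'sub j' hy'
          simp only [Finset.mem_insert, Finset.mem_singleton] at hy
          rcases hy with rfl | rfl
          · exact (Finset.mem_erase.1 (Finset.mem_erase.1 hmem).2).1 rfl
          · exact (Finset.mem_erase.1 hmem).1 rfl
        intro i j hij
        induction i using Fin.cases with
        | zero =>
          induction j using Fin.cases with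
          | zero => exact absurd rfl hij
          | succ j' => simpa only [Fin.cons_zero, Fin.cons_succ] using hdab j'
        | succ i' =>
          induction j using Fin.cases with
          | zero => simpa only [Fin.cons_zero, Fin.cons_succ] using (hdab i').symm
          | succ j' =>
            simp only [Fin.cons_succ]
            exact hdisj' i' j' (fun h => hij (congrArg Fin.succ h))
      · ext y
        simp only [Set.mem_iUnion]
        constructor
        · rintro ⟨i, hi⟩
          induction i using Fin.cases with
          | zero =>
            simp only [Fin.cons_zero] at hi
            simp only [Finset.coe_insert, Set.mem_insert_iff, Finset.coe_singleton,
              Set.mem_singleton_iff] at hi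
            rcases hi with rfl | rfl
            · exact_mod_cast haS
            · exact_mod_cast hbS
          | succ i' =>
            simp only [Fin.cons_succ] at hi
            have h1 : y ∈ S' := hA'sub i' (by exact_mod_cast hi)
            have := (Finset.mem_erase.1 (Finset.mem_erase.1 h1).2).2
            exact_mod_cast this
        · intro hyS
          have hyS' : y ∈ S := by exact_mod_cast hyS
          by_cases h1 : y = a
          · exact ⟨0, by simp [Fin.cons_zero, h1]⟩
          by_cases h2 : y = b
          · exact ⟨0, by simp [Fin.cons_zero, h2]⟩
          · have : y ∈ S' := Finset.mem_erase.2 ⟨h2, Finset.mem_erase.2 ⟨h1, hyS'⟩⟩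
            have : (y : ℝ) ∈ (⋃ j, ((A' j : Finset ℝ) : Set ℝ)) := by
              rw [hunion']; exact_mod_cast this
            obtain ⟨j, hj⟩ := Set.mem_iUnion.1 this
            exact ⟨j.succ, by simpa [Fin.cons_succ] using hj⟩
      · intro i
        induction i using Fin.cases with
        | zero =>
          simp only [Fin.cons_zero]
          exact pair_hull (Finset.mem_insert_self a {b})
            (Finset.mem_insert_of_mem (Finset.mem_singleton_self b)) hap.le hpb.le
        | succ i' => simpa [Fin.cons_succ] using hconv' i'

end Helpers

open Finset in
theorem tverberg_core_on_line
    (r t n : ℕ) (hr : 0 < r) (ht : 0 < t) (hrt : r + t ≤ n + 1)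
    (x : Fin (n + 1) → ℝ) (hx : StrictMono x) :
    TverCore r t (Finset.univ.image x) =
      Set.Icc (x ⟨r + t - 1, by omega⟩) (x ⟨n + 1 - r - t, by omega⟩) ∧
    ((TverCore r t (Finset.univ.image x)).Nonempty ↔ 2 * (r - 1) + 2 * t ≤ n) := by
  have hxinj := hx.injective
  have key : TverCore r t (Finset.univ.image x) =
      Set.Icc (x ⟨r + t - 1, by omega⟩) (x ⟨n + 1 - r - t, by omega⟩) := by
    ext p
    constructor
    · intro hp
      constructor
      · by_contra hcon
        push_neg at hcon
        set S' := (Finset.Iio (⟨t, by omega⟩ : Fin (n+1))).image x with hS'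
        have hsub : S' ⊆ Finset.univ.image x :=
          Finset.image_subset_image (Finset.subset_univ _)
        have hcard : S'.card = t := by
          rw [Finset.card_image_of_injective _ hxinj, Fin.card_Iio]
        have hcount := (counts_of_mem_tverSet (hp S' hsub hcard)).1
        have hsub2 : (Finset.univ.image x \ S').filter (fun y => y ≤ p) ⊆
            (Finset.Ico (⟨t, by omega⟩ : Fin (n+1)) ⟨r + t - 1, by omega⟩).image x := by
          intro y hy
          obtain ⟨hy1, hy2⟩ := Finset.mem_filter.1 hy
          obtain ⟨hyS, hyS'⟩ := Finset.mem_sdiff.1 hy1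
          obtain ⟨j, -, rfl⟩ := Finset.mem_image.1 hyS
          have hjt : ¬ j < (⟨t, by omega⟩ : Fin (n+1)) := by
            intro h
            exact hyS' (Finset.mem_image.2 ⟨j, Finset.mem_Iio.2 h, rfl⟩)
          have hjlt : j < (⟨r + t - 1, by omega⟩ : Fin (n+1)) :=
            hx.lt_iff_lt.1 (lt_of_le_of_lt hy2 hcon)
          exact Finset.mem_image.2 ⟨j, Finset.mem_Ico.2 ⟨not_lt.1 hjt, hjlt⟩, rfl⟩
        have := Finset.card_le_card hsub2
        rw [Finset.card_image_of_injective _ hxinj, Fin.card_Ico] at this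
        simp only [Fin.val_mk] at this
        omega
      · by_contra hcon
        push_neg at hcon
        set S' := (Finset.Ici (⟨n + 1 - t, by omega⟩ : Fin (n+1))).image x with hS'
        have hsub : S' ⊆ Finset.univ.image x :=
          Finset.image_subset_image (Finset.subset_univ _)
        have hcard : S'.card = t := by
          rw [Finset.card_image_of_injective _ hxinj, Fin.card_Ici]
          simp only [Fin.val_mk]
          omega
        have hcount := (counts_of_mem_tverSet (hp S' hsub hcard)).2
        have hsub2 : (Finset.univ.image x \ S').filter (fun y => p ≤ y) ⊆
            (Finset.Ioo (⟨n + 1 - r - t, by omega⟩ : Fin (n+1))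
              ⟨n + 1 - t, by omega⟩).image x := by
          intro y hy
          obtain ⟨hy1, hy2⟩ := Finset.mem_filter.1 hy
          obtain ⟨hyS, hyS'⟩ := Finset.mem_sdiff.1 hy1
          obtain ⟨j, -, rfl⟩ := Finset.mem_image.1 hyS
          have hjt : ¬ (⟨n + 1 - t, by omega⟩ : Fin (n+1)) ≤ j := by
            intro h
            exact hyS' (Finset.mem_image.2 ⟨j, Finset.mem_Ici.2 h, rfl⟩)
          have hjlt : (⟨n + 1 - r - t, by omega⟩ : Fin (n+1)) < j :=
            hx.lt_iff_lt.1 (lt_of_lt_of_le hcon hy2)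
          exact Finset.mem_image.2 ⟨j, Finset.mem_Ioo.2 ⟨hjlt, not_le.1 hjt⟩, rfl⟩
        have := Finset.card_le_card hsub2
        rw [Finset.card_image_of_injective _ hxinj, Fin.card_Ioo] at this
        simp only [Fin.val_mk] at this
        omega
    · intro hp S' hsub hcard
      apply mem_tverSet_of_counts r hr
      · have h1 : (Finset.Iic (⟨r + t - 1, by omega⟩ : Fin (n+1))).image x ⊆
            (Finset.univ.image x).filter (fun y => y ≤ p) := by
          intro y hy
          obtain ⟨j, hj, rfl⟩ := Finset.mem_image.1 hy
          refine Finset.mem_filter.2 ⟨Finset.mem_image.2 ⟨j, Finset.mem_univ _, rfl⟩, ?_⟩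
          exact le_trans (hx.monotone (Finset.mem_Iic.1 hj)) hp.1
        have h2 := Finset.card_le_card h1
        rw [Finset.card_image_of_injective _ hxinj, Fin.card_Iic] at h2
        simp only [Fin.val_mk] at h2
        have h3 := Finset.le_card_sdiff S' ((Finset.univ.image x).filter (fun y => y ≤ p))
        have h4 : ((Finset.univ.image x).filter (fun y => y ≤ p)) \ S' ⊆
            ((Finset.univ.image x) \ S').filter (fun y => y ≤ p) := by
          intro y hy
          obtain ⟨hy1, hy2⟩ := Finset.mem_sdiff.1 hy
          obtain ⟨hyS, hyp⟩ := Finset.mem_filter.1 hy1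
          exact Finset.mem_filter.2 ⟨Finset.mem_sdiff.2 ⟨hyS, hy2⟩, hyp⟩
        have h5 := Finset.card_le_card h4
        omega
      · have h1 : (Finset.Ici (⟨n + 1 - r - t, by omega⟩ : Fin (n+1))).image x ⊆
            (Finset.univ.image x).filter (fun y => p ≤ y) := by
          intro y hy
          obtain ⟨j, hj, rfl⟩ := Finset.mem_image.1 hy
          refine Finset.mem_filter.2 ⟨Finset.mem_image.2 ⟨j, Finset.mem_univ _, rfl⟩, ?_⟩
          exact le_trans hp.2 (hx.monotone (Finset.mem_Ici.1 hj))
        have h2 := Finset.card_le_card h1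
        rw [Finset.card_image_of_injective _ hxinj, Fin.card_Ici] at h2
        simp only [Fin.val_mk] at h2
        have h3 := Finset.le_card_sdiff S' ((Finset.univ.image x).filter (fun y => p ≤ y))
        have h4 : ((Finset.univ.image x).filter (fun y => p ≤ y)) \ S' ⊆
            ((Finset.univ.image x) \ S').filter (fun y => p ≤ y) := by
          intro y hy
          obtain ⟨hy1, hy2⟩ := Finset.mem_sdiff.1 hy
          obtain ⟨hyS, hyp⟩ := Finset.mem_filter.1 hy1
          exact Finset.mem_filter.2 ⟨Finset.mem_sdiff.2 ⟨hyS, hy2⟩, hyp⟩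
        have h5 := Finset.card_le_card h4
        omega
  refine ⟨key, ?_⟩
  rw [key, Set.nonempty_Icc, hx.le_iff_le, Fin.mk_le_mk]
  omega
end
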